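/- arXiv:2509.21781 — 3 statements merged into one kernel-verified Lean document; each statement's English description precedes it below -/
import Mathlib

section
/- Let D = (P, B) be a nontrivial 2-(v,k,λ) design with replication number r, and let G ≤ Aut(D) be a half-flag-transitive automorphism group of D. If λ ≥ gcd(r, 2λ)², then G is point-primitive on P. -/
open Finset

/-- `blocks` is a (simple) nontrivial 2-(v,k,λ) design on the point set `P`,
with replication number `r`. -/
structure IsTwoDesign {P : Type*} [Fintype P] [DecidableEq P]
    (blocks : Finset (Finset P)) (v k lam r : ℕ) : Prop where
  card_points : Fintype.card P = v
  block_size : ∀ B ∈ blocks, B.card = k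
  lam_pos : 0 < lam
  pair_count : ∀ x y : P, x ≠ y →
    (blocks.filter fun B => x ∈ B ∧ y ∈ B).card = lam
  repl_count : ∀ x : P, (blocks.filter fun B => x ∈ B).card = r
  k_gt : 2 < k
  k_lt : k < v - 1

/-- `G` is a group of automorphisms of the design with block set `blocks`:
every element of `G` maps blocks to blocks. -/
def IsAutGroup {P : Type*} [DecidableEq P] (G : Subgroup (Equiv.Perm P))
    (blocks : Finset (Finset P)) : Prop :=
  ∀ g ∈ G, ∀ B ∈ blocks, B.image ⇑g ∈ blocks

/-- `G` is half-flag-transitive on the design with block set `blocks`: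
`G` is transitive on blocks, and for every block `B` the setwise stabilizer
of `B` in `G` has exactly two orbits `O₁`, `O₂` on the points of `B`,
of equal size (hence each of size `k/2`). -/
def HalfFlagTransitive {P : Type*} [DecidableEq P] (G : Subgroup (Equiv.Perm P))
    (blocks : Finset (Finset P)) : Prop :=
  (∀ B₁ ∈ blocks, ∀ B₂ ∈ blocks, ∃ g ∈ G, B₁.image ⇑g = B₂) ∧
  ∀ B ∈ blocks, ∃ O₁ O₂ : Finset P,
    O₁.Nonempty ∧ O₂.Nonempty ∧ Disjoint O₁ O₂ ∧ O₁ ∪ O₂ = B ∧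
    O₁.card = O₂.card ∧
    (∀ g ∈ G, B.image ⇑g = B → O₁.image ⇑g = O₁) ∧
    (∀ g ∈ G, B.image ⇑g = B → O₂.image ⇑g = O₂) ∧
    (∀ x ∈ O₁, ∀ y ∈ O₁, ∃ g ∈ G, B.image ⇑g = B ∧ g x = y) ∧
    (∀ x ∈ O₂, ∀ y ∈ O₂, ∃ g ∈ G, B.image ⇑g = B ∧ g x = y)

/-- `C` is a partition of the point set `P` that is invariant under `G`. -/
def IsInvariantPartition {P : Type*} [Fintype P] [DecidableEq P]
    (G : Subgroup (Equiv.Perm P)) (C : Finset (Finset P)) : Prop :=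
  (∀ c ∈ C, c.Nonempty) ∧
  (∀ x : P, ∃! c : Finset P, c ∈ C ∧ x ∈ c) ∧
  (∀ g ∈ G, ∀ c ∈ C, c.image ⇑g ∈ C)

/-- A partition of `P` is trivial if all classes are singletons, or it is `{P}`. -/
def TrivialPartition {P : Type*} [Fintype P] [DecidableEq P]
    (C : Finset (Finset P)) : Prop :=
  (∀ c ∈ C, c.card = 1) ∨ C = {Finset.univ}

/-- `G` is point-primitive: it is transitive on points and the only
`G`-invariant partitions of the point set are the trivial ones. -/
def PointPrimitive {P : Type*} [Fintype P] [DecidableEq P]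
    (G : Subgroup (Equiv.Perm P)) : Prop :=
  (∀ x y : P, ∃ g ∈ G, g x = y) ∧
  ∀ C : Finset (Finset P), IsInvariantPartition G C → TrivialPartition C

open Matrix
open scoped Classical

section HFTAux

variable {P : Type*} [Fintype P] [DecidableEq P]

/-- generic double counting -/
lemma hft_dcount {α β : Type*} (s : Finset α) (t : Finset β) (R : α → β → Prop)
    [∀ a b, Decidable (R a b)] :
    ∑ a ∈ s, (t.filter (fun b => R a b)).card
      = ∑ b ∈ t, (s.filter (fun a => R a b)).card := by
  simp_rw [Finset.card_filter]
  exact Finset.sum_comm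

lemma hft_vpos {blocks : Finset (Finset P)} {v k lam r : ℕ}
    (hD : IsTwoDesign blocks v k lam r) : 5 ≤ v := by
  have h1 := hD.k_gt; have h2 := hD.k_lt; omega

lemma hft_bk {blocks : Finset (Finset P)} {v k lam r : ℕ}
    (hD : IsTwoDesign blocks v k lam r) : blocks.card * k = v * r := by
  have h := hft_dcount (univ : Finset P) blocks (fun x B => x ∈ B)
  have h1 : ∑ x : P, (blocks.filter (fun B => x ∈ B)).card = v * r := by
    simp [hD.repl_count, ← hD.card_points, Finset.card_univ]
  have h2 : ∑ B ∈ blocks, ((univ : Finset P).filter (fun x => x ∈ B)).card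
      = blocks.card * k := by
    rw [Finset.sum_congr rfl (fun B hB => ?_), Finset.sum_const, smul_eq_mul]
    rw [Finset.filter_mem_eq_inter, Finset.univ_inter]
    exact hD.block_size B hB
  rw [h1, h2] at h
  omega

lemma hft_repl {blocks : Finset (Finset P)} {v k lam r : ℕ}
    (hD : IsTwoDesign blocks v k lam r) : r * (k - 1) = lam * (v - 1) := by
  have hv := hft_vpos hD
  have : 0 < Fintype.card P := by rw [hD.card_points]; omega
  obtain ⟨x⟩ := Fintype.card_pos_iff.mp this
  have h := hft_dcount ((univ : Finset P).erase x) (blocks.filter (fun B => x ∈ B))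
      (fun y B => y ∈ B)
  have h1 : ∑ y ∈ (univ : Finset P).erase x,
      ((blocks.filter (fun B => x ∈ B)).filter (fun B => y ∈ B)).card = (v - 1) * lam := by
    have hstep : ∀ y ∈ (univ : Finset P).erase x,
        ((blocks.filter (fun B => x ∈ B)).filter (fun B => y ∈ B)).card = lam := by
      intro y hy
      rw [Finset.filter_filter]
      have hyx : y ≠ x := Finset.ne_of_mem_erase hy
      rw [← hD.pair_count x y hyx.symm]
    rw [Finset.sum_congr rfl hstep, Finset.sum_const, smul_eq_mul]
    rw [Finset.card_erase_of_mem (Finset.mem_univ x), Finset.card_univ, hD.card_points]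
  have h2 : ∑ B ∈ blocks.filter (fun B => x ∈ B),
      (((univ : Finset P).erase x).filter (fun y => y ∈ B)).card = r * (k - 1) := by
    have hstep : ∀ B ∈ blocks.filter (fun B => x ∈ B),
        (((univ : Finset P).erase x).filter (fun y => y ∈ B)).card = k - 1 := by
      intro B hB
      have hxB : x ∈ B := (Finset.mem_filter.mp hB).2
      have hBk : B.card = k := hD.block_size B (Finset.mem_filter.mp hB).1
      have he : ((univ : Finset P).erase x).filter (fun y => y ∈ B) = B.erase x := by
        ext y
        simp [Finset.mem_erase, and_comm]
      rw [he, Finset.card_erase_of_mem hxB, hBk]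
    rw [Finset.sum_congr rfl hstep, Finset.sum_const, smul_eq_mul, hD.repl_count x]
  rw [h1] at h
  have h3 : (v - 1) * lam = r * (k - 1) := by rw [← h2]; exact h
  rw [mul_comm] at h3; exact h3.symm

lemma hft_rpos {blocks : Finset (Finset P)} {v k lam r : ℕ}
    (hD : IsTwoDesign blocks v k lam r) : lam < r := by
  have h := hft_repl hD
  have hv := hft_vpos hD
  have h1 := hD.k_gt; have h2 := hD.k_lt; have h3 := hD.lam_pos
  by_contra h'
  push_neg at h'
  have e1 : r * (k - 1) ≤ lam * (k - 1) := Nat.mul_le_mul_right _ h'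
  have e2 : lam * (k - 1) < lam * (v - 1) :=
    Nat.mul_lt_mul_of_pos_left (by omega) h3
  omega


lemma hft_fisher {blocks : Finset (Finset P)} {v k lam r : ℕ}
    (hD : IsTwoDesign blocks v k lam r) (hlr : lam < r) : v ≤ blocks.card := by
  classical
  set a : ℚ := (r : ℚ) - lam with ha
  have ha0 : 0 < a := by
    rw [ha]; rw [sub_pos]; exact_mod_cast hlr
  set t : ℚ := (lam : ℚ) * v + a with ht
  have ht0 : 0 < t := by
    have : (0:ℚ) ≤ (lam : ℚ) * v := by positivity
    linarith
  set M : Matrix P {B // B ∈ blocks} ℚ := fun x B => if x ∈ (B : Finset P) then 1 else 0 with hM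
  set A : Matrix P P ℚ := Matrix.of fun x y => if x = y then (r:ℚ) else lam with hA
  have hMA : M * Mᵀ = A := by
    ext x y
    rw [Matrix.mul_apply]
    simp only [Matrix.transpose_apply]
    simp only [hM]
    have step : ∀ B : {B // B ∈ blocks},
        (if x ∈ (B:Finset P) then (1:ℚ) else 0) * (if y ∈ (B:Finset P) then 1 else 0)
          = if x ∈ (B:Finset P) ∧ y ∈ (B:Finset P) then 1 else 0 := by
      intro B
      by_cases hx : x ∈ (B:Finset P) <;> by_cases hy : y ∈ (B:Finset P) <;> simp [hx, hy]
    rw [Finset.sum_congr rfl (fun B _ => step B)]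
    rw [← Finset.sum_subtype blocks (fun _ => Iff.rfl) (fun B => if x ∈ B ∧ y ∈ B then (1:ℚ) else 0)]
    rw [Finset.sum_boole]
    by_cases hxy : x = y
    · subst hxy
      have : blocks.filter (fun B => x ∈ B ∧ x ∈ B) = blocks.filter (fun B => x ∈ B) := by
        simp
      rw [this, hD.repl_count x]
      simp [hA, Matrix.of_apply]
    · rw [hD.pair_count x y hxy]
      simp [hA, Matrix.of_apply, hxy]
  set N : Matrix P P ℚ := Matrix.of (fun x y => (if x = y then 1/a else 0) - lam/(a*t)) with hN
  have hAN : A * N = 1 := by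
    ext x y
    rw [Matrix.mul_apply]
    have expand : ∀ z, A x z * N z y
        = ((if x = z then (r:ℚ) else lam) * (if z = y then 1/a else 0))
          - (if x = z then (r:ℚ) else lam) * (lam/(a*t)) := by
      intro z
      simp only [hA, hN, Matrix.of_apply]
      rw [mul_sub]
    rw [Finset.sum_congr rfl (fun z _ => expand z), Finset.sum_sub_distrib]
    have s1 : ∑ z : P, (if x = z then (r:ℚ) else lam) * (if z = y then 1/a else 0)
        = (if x = y then (r:ℚ) else lam) * (1/a) := by
      have step : ∀ z : P, (if x = z then (r:ℚ) else lam) * (if z = y then 1/a else 0)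
          = if z = y then (if x = z then (r:ℚ) else lam) * (1/a) else 0 := by
        intro z; split_ifs <;> simp
      rw [Finset.sum_congr rfl (fun z _ => step z), Finset.sum_ite_eq' univ y]
      simp
    have s2 : ∑ z : P, (if x = z then (r:ℚ) else lam) * (lam/(a*t)) = t * (lam/(a*t)) := by
      rw [← Finset.sum_mul]
      congr 1
      have step : ∀ z : P, (if x = z then (r:ℚ) else lam) = lam + (if x = z then a else 0) := by
        intro z; split_ifs <;> simp [ha] <;> ring
      rw [Finset.sum_congr rfl (fun z _ => step z), Finset.sum_add_distrib, Finset.sum_const,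
        Finset.sum_ite_eq univ x]
      simp [Finset.card_univ, hD.card_points, ht]
      ring
    rw [s1, s2]
    have htc : t * (lam/(a*t)) = lam/a := by
      field_simp
    rw [htc, Matrix.one_apply]
    split_ifs with hxy
    · field_simp
      exact ha.symm
    · field_simp
      simp
  have hInv := invertibleOfRightInverse A N hAN
  have hunit : IsUnit A := isUnit_of_invertible A
  calc v = Fintype.card P := hD.card_points.symm
  _ = A.rank := (Matrix.rank_of_isUnit A hunit).symm
  _ = (M * Mᵀ).rank := by rw [hMA]
  _ ≤ M.rank := Matrix.rank_mul_le_left M Mᵀ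
  _ ≤ Fintype.card {B // B ∈ blocks} := Matrix.rank_le_card_width M
  _ = blocks.card := Fintype.card_coe blocks

/-- flag equivalence -/
def FRelP {P : Type*} [DecidableEq P] (G : Subgroup (Equiv.Perm P))
    (p q : P × Finset P) : Prop :=
  ∃ g ∈ G, g p.1 = q.1 ∧ p.2.image ⇑g = q.2

lemma hft_img_inv (g : Equiv.Perm P) {s t : Finset P} (h : s.image ⇑g = t) :
    t.image ⇑g⁻¹ = s := by
  subst h
  rw [Finset.image_image]
  have : (⇑g⁻¹ ∘ ⇑g) = id := by
    funext z; simp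
  rw [this, Finset.image_id]

lemma hft_comp_img (a b : Equiv.Perm P) (s : Finset P) :
    s.image ⇑(a * b) = (s.image ⇑b).image ⇑a := by
  rw [Finset.image_image, Equiv.Perm.coe_mul]

lemma frel_refl {G : Subgroup (Equiv.Perm P)} (p : P × Finset P) : FRelP G p p :=
  ⟨1, G.one_mem, by simp, by simp⟩

lemma frel_symm {G : Subgroup (Equiv.Perm P)} {p q : P × Finset P}
    (h : FRelP G p q) : FRelP G q p := by
  obtain ⟨g, hg, h1, h2⟩ := h
  exact ⟨g⁻¹, G.inv_mem hg, by rw [← h1]; simp, hft_img_inv g h2⟩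

lemma frel_trans {G : Subgroup (Equiv.Perm P)} {p q s : P × Finset P}
    (h : FRelP G p q) (h' : FRelP G q s) : FRelP G p s := by
  obtain ⟨g, hg, h1, h2⟩ := h
  obtain ⟨g', hg', h1', h2'⟩ := h'
  refine ⟨g' * g, G.mul_mem hg' hg, ?_, ?_⟩
  · rw [Equiv.Perm.coe_mul, Function.comp_apply, h1, h1']
  · rw [hft_comp_img, h2, h2']

/-- at most two flag classes at a point -/
lemma hft_two {blocks : Finset (Finset P)} {G : Subgroup (Equiv.Perm P)}
    (hHFT : HalfFlagTransitive G blocks) {x₀ : P} {B B' B'' : Finset P}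
    (hB : B ∈ blocks) (hxB : x₀ ∈ B) (hB' : B' ∈ blocks) (hxB' : x₀ ∈ B')
    (hB'' : B'' ∈ blocks) (hxB'' : x₀ ∈ B'')
    (hn1 : ¬ FRelP G (x₀, B) (x₀, B'')) (hn2 : ¬ FRelP G (x₀, B') (x₀, B'')) :
    FRelP G (x₀, B) (x₀, B') := by
  obtain ⟨O₁, O₂, hO1ne, hO2ne, hdisj, hunion, hcardeq, hstab1, hstab2, htr1, htr2⟩ :=
    hHFT.2 B'' hB''
  set conn : P → P → Prop := fun p q => ∃ h ∈ G, B''.image ⇑h = B'' ∧ h p = q with hconn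
  have hmemO : ∀ p ∈ B'', p ∈ O₁ ∨ p ∈ O₂ := by
    intro p hp
    rw [← hunion] at hp
    exact Finset.mem_union.mp hp
  have htri : ∀ p ∈ B'', ∀ q ∈ B'', ∀ w ∈ B'',
      ¬ conn p q → (conn p w ∨ conn q w) := by
    intro p hp q hq w hw hnpq
    rcases hmemO p hp with h1 | h1 <;> rcases hmemO q hq with h2 | h2 <;>
      rcases hmemO w hw with h3 | h3
    · exact absurd (htr1 p h1 q h2) hnpq
    · exact absurd (htr1 p h1 q h2) hnpq
    · exact Or.inl (htr1 p h1 w h3)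
    · exact Or.inr (htr2 q h2 w h3)
    · exact Or.inr (htr1 q h2 w h3)
    · exact Or.inl (htr2 p h1 w h3)
    · exact absurd (htr2 p h1 q h2) hnpq
    · exact absurd (htr2 p h1 q h2) hnpq
  obtain ⟨g, hg, hgB⟩ := hHFT.1 B hB B'' hB''
  obtain ⟨g', hg', hg'B⟩ := hHFT.1 B' hB' B'' hB''
  have hgx : g x₀ ∈ B'' := by
    rw [← hgB]; exact Finset.mem_image_of_mem _ hxB
  have hg'x : g' x₀ ∈ B'' := by
    rw [← hg'B]; exact Finset.mem_image_of_mem _ hxB'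
  -- from conn (a x₀) x₀ we get FRelP (x₀, A) (x₀, B'') whenever A.image a = B''
  have hlift : ∀ (a : Equiv.Perm P) (A : Finset P), a ∈ G → A.image ⇑a = B'' →
      conn (a x₀) x₀ → FRelP G (x₀, A) (x₀, B'') := by
    intro a A ha haB hc
    obtain ⟨h, hh, hhB, hhx⟩ := hc
    refine ⟨h * a, G.mul_mem hh ha, ?_, ?_⟩
    · rw [Equiv.Perm.coe_mul, Function.comp_apply, hhx]
    · rw [hft_comp_img, haB, hhB]
  have hnc1 : ¬ conn (g x₀) x₀ := fun hc => hn1 (hlift g B hg hgB hc)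
  have hnc2 : ¬ conn (g' x₀) x₀ := fun hc => hn2 (hlift g' B' hg' hg'B hc)
  have hnpq : conn (g x₀) (g' x₀) := by
    by_contra hnpq
    rcases htri (g x₀) hgx (g' x₀) hg'x x₀ hxB'' hnpq with h | h
    · exact hnc1 h
    · exact hnc2 h
  obtain ⟨h, hh, hhB, hhx⟩ := hnpq
  refine ⟨g'⁻¹ * (h * g), G.mul_mem (G.inv_mem hg') (G.mul_mem hh hg), ?_, ?_⟩
  · simp only [Equiv.Perm.coe_mul, Function.comp_apply]
    rw [hhx]
    simp
  · rw [hft_comp_img, hft_comp_img, hgB, hhB, hft_img_inv g' hg'B]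

lemma hft_ptrans {blocks : Finset (Finset P)} {v k lam r : ℕ} {G : Subgroup (Equiv.Perm P)}
    (hD : IsTwoDesign blocks v k lam r) (hAut : IsAutGroup G blocks)
    (hHFT : HalfFlagTransitive G blocks) (hlr : lam < r) :
    ∀ x y : P, ∃ g ∈ G, g x = y := by
  intro x y
  by_contra hxy0
  have hxy : ∀ g ∈ G, g x ≠ y := by
    intro g hg hgx; exact hxy0 ⟨g, hg, hgx⟩
  have hr0 : 0 < r := lt_of_le_of_lt (Nat.zero_le _) hlr
  have hpt : ∀ p : P, ∃ B ∈ blocks, p ∈ B := by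
    intro p
    have h := hD.repl_count p
    have hne : (blocks.filter (fun B => p ∈ B)).Nonempty := by
      rw [← Finset.card_pos, h]; exact hr0
    obtain ⟨B, hB⟩ := hne
    exact ⟨B, (Finset.mem_filter.mp hB).1, (Finset.mem_filter.mp hB).2⟩
  set A : Finset P := univ.filter (fun p => ∃ g ∈ G, g x = p) with hA
  set A' : Finset P := univ.filter (fun p => ∃ g ∈ G, g y = p) with hA'
  have hmemA : ∀ p, p ∈ A ↔ ∃ g ∈ G, g x = p := by intro p; simp [hA]
  have hmemA' : ∀ p, p ∈ A' ↔ ∃ g ∈ G, g y = p := by intro p; simp [hA']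
  have hxA : x ∈ A := (hmemA x).mpr ⟨1, G.one_mem, rfl⟩
  have hyA' : y ∈ A' := (hmemA' y).mpr ⟨1, G.one_mem, rfl⟩
  have hm : 0 < A.card := Finset.card_pos.mpr ⟨x, hxA⟩
  have hinvA : ∀ g ∈ G, A.image ⇑g = A := by
    intro g hg
    apply Finset.eq_of_subset_of_card_le
    · intro q hq
      obtain ⟨p, hp, rfl⟩ := Finset.mem_image.mp hq
      obtain ⟨g', hg', rfl⟩ := (hmemA p).mp hp
      exact (hmemA _).mpr ⟨g * g', G.mul_mem hg hg', rfl⟩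
    · rw [Finset.card_image_of_injective _ (Equiv.injective _)]
  have hinvA' : ∀ g ∈ G, A'.image ⇑g = A' := by
    intro g hg
    apply Finset.eq_of_subset_of_card_le
    · intro q hq
      obtain ⟨p, hp, rfl⟩ := Finset.mem_image.mp hq
      obtain ⟨g', hg', rfl⟩ := (hmemA' p).mp hp
      exact (hmemA' _).mpr ⟨g * g', G.mul_mem hg hg', rfl⟩
    · rw [Finset.card_image_of_injective _ (Equiv.injective _)]
  have hdisjAA' : Disjoint A A' := by
    rw [Finset.disjoint_left]
    intro p hp hp'
    obtain ⟨g, hg, hgx⟩ := (hmemA p).mp hp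
    obtain ⟨g', hg', hgy⟩ := (hmemA' p).mp hp'
    refine hxy (g'⁻¹ * g) (G.mul_mem (G.inv_mem hg') hg) ?_
    simp only [Equiv.Perm.coe_mul, Function.comp_apply, hgx, ← hgy, Equiv.Perm.inv_def, Equiv.symm_apply_apply]
  have hconst : ∀ S : Finset P, (∀ g ∈ G, S.image ⇑g = S) →
      ∀ B ∈ blocks, ∀ B' ∈ blocks, (B ∩ S).card = (B' ∩ S).card := by
    intro S hS B hB B' hB'
    obtain ⟨g, hg, hgB⟩ := hHFT.1 B hB B' hB'
    have himg : (B ∩ S).image ⇑g = B' ∩ S := by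
      rw [Finset.image_inter _ _ (Equiv.injective _), hgB, hS g hg]
    rw [← himg, Finset.card_image_of_injective _ (Equiv.injective _)]
  have hsplit : ∀ S : Finset P, (∀ g ∈ G, S.image ⇑g = S) →
      ∀ B ∈ blocks, (B ∩ S).card = 0 ∨ 2 * (B ∩ S).card = k ∨ (B ∩ S).card = k := by
    intro S hS B hB
    obtain ⟨O₁, O₂, hO1ne, hO2ne, hdisj, hunion, hcardeq, hstab1, hstab2, htr1, htr2⟩ :=
      hHFT.2 B hB
    have hk : B.card = k := hD.block_size B hB
    have hOk : O₁.card + O₂.card = k := by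
      rw [← hk, ← hunion, Finset.card_union_of_disjoint hdisj]
    have piece : ∀ (O : Finset P),
        (∀ a ∈ O, ∀ b ∈ O, ∃ g ∈ G, B.image ⇑g = B ∧ g a = b) →
        O ∩ S = O ∨ O ∩ S = ∅ := by
      intro O htr
      by_cases hex : (O ∩ S).Nonempty
      · left
        obtain ⟨p, hp⟩ := hex
        have hpO := Finset.mem_inter.mp hp
        apply Finset.Subset.antisymm Finset.inter_subset_left
        intro q hq
        obtain ⟨g, hg, hgB, hgpq⟩ := htr p hpO.1 q hq
        refine Finset.mem_inter.mpr ⟨hq, ?_⟩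
        rw [← hgpq, ← hS g hg]
        exact Finset.mem_image_of_mem _ hpO.2
      · right; exact Finset.not_nonempty_iff_eq_empty.mp hex
    have hBS : B ∩ S = (O₁ ∩ S) ∪ (O₂ ∩ S) := by
      rw [← hunion, Finset.union_inter_distrib_right]
    rcases piece O₁ htr1 with h1 | h1 <;> rcases piece O₂ htr2 with h2 | h2
    · right; right
      rw [hBS, h1, h2, Finset.card_union_of_disjoint hdisj]; omega
    · right; left
      rw [hBS, h1, h2, Finset.union_empty]; omega
    · right; left
      rw [hBS, h1, h2, Finset.empty_union]; omega
    · left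
      rw [hBS, h1, h2, Finset.union_empty, Finset.card_empty]
  obtain ⟨B₀, hB₀, hxB₀⟩ := hpt x
  have heApos : 0 < (B₀ ∩ A).card :=
    Finset.card_pos.mpr ⟨x, Finset.mem_inter.mpr ⟨hxB₀, hxA⟩⟩
  have heA'pos : 0 < (B₀ ∩ A').card := by
    obtain ⟨By, hBy, hyBy⟩ := hpt y
    have h1 : (By ∩ A').card = (B₀ ∩ A').card := hconst A' hinvA' By hBy B₀ hB₀
    rw [← h1]
    exact Finset.card_pos.mpr ⟨y, Finset.mem_inter.mpr ⟨hyBy, hyA'⟩⟩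
  have heAltk : (B₀ ∩ A).card ≠ k := by
    intro hEk
    obtain ⟨B, hB, hyB⟩ := hpt y
    have h1 : (B ∩ A).card = k := (hconst A hinvA B hB B₀ hB₀).trans hEk
    have hBA : B ∩ A = B := by
      apply Finset.eq_of_subset_of_card_le Finset.inter_subset_left
      rw [h1, hD.block_size B hB]
    have : y ∈ A := by
      have : y ∈ B ∩ A := hBA.symm ▸ hyB
      exact (Finset.mem_inter.mp this).2
    obtain ⟨g, hg, hgx⟩ := (hmemA y).mp this
    exact hxy g hg hgx
  have heA'ltk : (B₀ ∩ A').card ≠ k := by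
    intro hEk
    have h1 : (B₀ ∩ A').card = k := hEk
    have hBA : B₀ ∩ A' = B₀ := by
      apply Finset.eq_of_subset_of_card_le Finset.inter_subset_left
      rw [h1, hD.block_size B₀ hB₀]
    have hxA' : x ∈ A' := by
      have : x ∈ B₀ ∩ A' := hBA.symm ▸ hxB₀
      exact (Finset.mem_inter.mp this).2
    obtain ⟨g, hg, hgy⟩ := (hmemA' x).mp hxA'
    refine hxy g⁻¹ (G.inv_mem hg) ?_
    rw [← hgy, Equiv.Perm.inv_def, Equiv.symm_apply_apply]
  have h2eA : 2 * (B₀ ∩ A).card = k := by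
    rcases hsplit A hinvA B₀ hB₀ with h | h | h
    · omega
    · exact h
    · exact absurd h heAltk
  have h2eA' : 2 * (B₀ ∩ A').card = k := by
    rcases hsplit A' hinvA' B₀ hB₀ with h | h | h
    · omega
    · exact h
    · exact absurd h heA'ltk
  
  -- counting 1
  have cnt1 : ∀ S : Finset P, (∀ g ∈ G, S.image ⇑g = S) →
      blocks.card * (B₀ ∩ S).card = S.card * r := by
    intro S hS
    have h := hft_dcount S blocks (fun p B => p ∈ B)
    have h1 : ∑ p ∈ S, (blocks.filter (fun B => p ∈ B)).card = S.card * r := by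
      rw [Finset.sum_congr rfl (fun p _ => hD.repl_count p), Finset.sum_const, smul_eq_mul]
    have h2 : ∑ B ∈ blocks, (S.filter (fun p => p ∈ B)).card = blocks.card * (B₀ ∩ S).card := by
      have step : ∀ B ∈ blocks, (S.filter (fun p => p ∈ B)).card = (B₀ ∩ S).card := by
        intro B hB
        rw [Finset.filter_mem_eq_inter, Finset.inter_comm]
        exact hconst S hS B hB B₀ hB₀
      rw [Finset.sum_congr rfl step, Finset.sum_const, smul_eq_mul]
    rw [h1] at h
    rw [← h2]
    exact h.symm
  have cntA := cnt1 A hinvA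
  have cntA' := cnt1 A' hinvA'
  -- counting 2 : pairs within A
  have cnt2 : lam * (A.card * A.card - A.card) = blocks.card * ((B₀ ∩ A).card * (B₀ ∩ A).card - (B₀ ∩ A).card) := by
    have h := hft_dcount A.offDiag blocks (fun pq B => pq.1 ∈ B ∧ pq.2 ∈ B)
    have h1 : ∑ pq ∈ A.offDiag, (blocks.filter (fun B => pq.1 ∈ B ∧ pq.2 ∈ B)).card
        = (A.card * A.card - A.card) * lam := by
      have step : ∀ pq ∈ A.offDiag,
          (blocks.filter (fun B => pq.1 ∈ B ∧ pq.2 ∈ B)).card = lam := by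
        intro pq hpq
        exact hD.pair_count pq.1 pq.2 (Finset.mem_offDiag.mp hpq).2.2
      rw [Finset.sum_congr rfl step, Finset.sum_const, smul_eq_mul, Finset.offDiag_card]
    have h2 : ∑ B ∈ blocks, (A.offDiag.filter (fun pq => pq.1 ∈ B ∧ pq.2 ∈ B)).card
        = blocks.card * ((B₀ ∩ A).card * (B₀ ∩ A).card - (B₀ ∩ A).card) := by
      have step : ∀ B ∈ blocks,
          (A.offDiag.filter (fun pq => pq.1 ∈ B ∧ pq.2 ∈ B)).card = (B₀ ∩ A).card * (B₀ ∩ A).card - (B₀ ∩ A).card := by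
        intro B hB
        have hset : A.offDiag.filter (fun pq => pq.1 ∈ B ∧ pq.2 ∈ B) = (B ∩ A).offDiag := by
          ext pq
          simp only [Finset.mem_filter, Finset.mem_offDiag, Finset.mem_inter]
          tauto
        rw [hset, Finset.offDiag_card, hconst A hinvA B hB B₀ hB₀]
      rw [Finset.sum_congr rfl step, Finset.sum_const, smul_eq_mul]
    rw [h1] at h
    have h3 : (A.card * A.card - A.card) * lam = blocks.card * ((B₀ ∩ A).card * (B₀ ∩ A).card - (B₀ ∩ A).card) := by rw [← h2]; exact h
    rw [mul_comm (A.card * A.card - A.card) lam] at h3; exact h3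
  -- counting 3 : cross pairs
  have cnt3 : lam * (A.card * A'.card) = blocks.card * ((B₀ ∩ A).card * (B₀ ∩ A').card) := by
    have h := hft_dcount (A ×ˢ A') blocks (fun pq B => pq.1 ∈ B ∧ pq.2 ∈ B)
    have h1 : ∑ pq ∈ A ×ˢ A', (blocks.filter (fun B => pq.1 ∈ B ∧ pq.2 ∈ B)).card
        = (A.card * A'.card) * lam := by
      have step : ∀ pq ∈ A ×ˢ A',
          (blocks.filter (fun B => pq.1 ∈ B ∧ pq.2 ∈ B)).card = lam := by
        intro pq hpq
        have hpq' := Finset.mem_product.mp hpq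
        have hne : pq.1 ≠ pq.2 := by
          intro hcontra
          exact (Finset.disjoint_left.mp hdisjAA') hpq'.1 (hcontra ▸ hpq'.2)
        exact hD.pair_count pq.1 pq.2 hne
      rw [Finset.sum_congr rfl step, Finset.sum_const, smul_eq_mul, Finset.card_product]
    have h2 : ∑ B ∈ blocks, ((A ×ˢ A').filter (fun pq => pq.1 ∈ B ∧ pq.2 ∈ B)).card
        = blocks.card * ((B₀ ∩ A).card * (B₀ ∩ A').card) := by
      have step : ∀ B ∈ blocks,
          ((A ×ˢ A').filter (fun pq => pq.1 ∈ B ∧ pq.2 ∈ B)).card = (B₀ ∩ A).card * (B₀ ∩ A').card := by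
        intro B hB
        rw [Finset.filter_product, Finset.card_product,
          Finset.filter_mem_eq_inter, Finset.filter_mem_eq_inter,
          Finset.inter_comm A B, Finset.inter_comm A' B,
          hconst A hinvA B hB B₀ hB₀, hconst A' hinvA' B hB B₀ hB₀]
      rw [Finset.sum_congr rfl step, Finset.sum_const, smul_eq_mul]
    rw [h1] at h
    have h3 : (A.card * A'.card) * lam = blocks.card * ((B₀ ∩ A).card * (B₀ ∩ A').card) := by rw [← h2]; exact h
    rw [mul_comm (A.card * A'.card) lam] at h3; exact h3
  -- final arithmetic
  have heq : (B₀ ∩ A).card = (B₀ ∩ A').card := by omega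
  rw [← heq] at cntA'
  have hmm' : A.card = A'.card := by
    have h4 : A.card * r = A'.card * r := by omega
    exact Nat.eq_of_mul_eq_mul_right hr0 h4
  rw [← hmm', ← heq] at cnt3
  have hm2 : A.card ≤ A.card * A.card := Nat.le_mul_of_pos_left _ hm
  have he2 : (B₀ ∩ A).card ≤ (B₀ ∩ A).card * (B₀ ∩ A).card :=
    Nat.le_mul_of_pos_left _ heApos
  rw [show A.card * A.card = (A.card * A.card - A.card) + A.card from by omega] at cnt3
  rw [show (B₀ ∩ A).card * (B₀ ∩ A).card
      = ((B₀ ∩ A).card * (B₀ ∩ A).card - (B₀ ∩ A).card) + (B₀ ∩ A).card from by omega] at cnt3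
  rw [Nat.mul_add, Nat.mul_add] at cnt3
  have key : lam * A.card = blocks.card * (B₀ ∩ A).card := by omega
  rw [cntA, mul_comm lam A.card] at key
  have : lam = r := Nat.eq_of_mul_eq_mul_left hm key
  omega

lemma hft_half {blocks : Finset (Finset P)} {v k lam r : ℕ} {G : Subgroup (Equiv.Perm P)}
    (hD : IsTwoDesign blocks v k lam r) (hAut : IsAutGroup G blocks)
    (hHFT : HalfFlagTransitive G blocks)
    (hptrans : ∀ x y : P, ∃ g ∈ G, g x = y)
    (hbk : blocks.card * k = v * r) (hv0 : 0 < v)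
    {x₀ : P} {B₀ B₁ : Finset P}
    (hB₀ : B₀ ∈ blocks) (hx₀B₀ : x₀ ∈ B₀) (hB₁ : B₁ ∈ blocks) (hx₀B₁ : x₀ ∈ B₁)
    (hne : ¬ FRelP G (x₀, B₀) (x₀, B₁)) :
    2 * (blocks.filter (fun B => x₀ ∈ B ∧ FRelP G (x₀, B) (x₀, B₀))).card = r := by
  have hrow : ∀ yp : P,
      (blocks.filter (fun B' => yp ∈ B' ∧ FRelP G (yp, B') (x₀, B₀))).card
        = (blocks.filter (fun B => x₀ ∈ B ∧ FRelP G (x₀, B) (x₀, B₀))).card := by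
    intro yp
    obtain ⟨g, hg, hgx⟩ := hptrans x₀ yp
    have hginv : (g⁻¹ : Equiv.Perm P) yp = x₀ := by rw [← hgx]; simp
    apply Finset.card_nbij' (i := fun B' => B'.image ⇑g⁻¹) (j := fun B => B.image ⇑g)
    · intro B' hB'
      rw [Finset.mem_coe, Finset.mem_filter] at hB' ⊢
      obtain ⟨hB'bl, hyp, hfr⟩ := hB'
      refine ⟨hAut g⁻¹ (G.inv_mem hg) B' hB'bl, ?_, ?_⟩
      · rw [← hginv]; exact Finset.mem_image_of_mem _ hyp
      · refine frel_trans (q := (yp, B')) ⟨g, hg, hgx, ?_⟩ hfr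
        rw [Finset.image_image]
        have : (⇑g ∘ ⇑g⁻¹) = id := by funext z; simp
        rw [this, Finset.image_id]
    · intro B hB
      rw [Finset.mem_coe, Finset.mem_filter] at hB ⊢
      obtain ⟨hBbl, hx₀B, hfr⟩ := hB
      refine ⟨hAut g hg B hBbl, ?_, ?_⟩
      · rw [← hgx]; exact Finset.mem_image_of_mem _ hx₀B
      · exact frel_trans ⟨g⁻¹, G.inv_mem hg, by rw [← hgx]; simp,
          hft_img_inv g rfl⟩ hfr
    · intro B' _
      beta_reduce
      rw [Finset.image_image]
      have : (⇑g ∘ ⇑g⁻¹) = id := by funext z; simp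
      rw [this, Finset.image_id]
    · intro B _
      beta_reduce
      rw [Finset.image_image]
      have : (⇑g⁻¹ ∘ ⇑g) = id := by funext z; simp
      rw [this, Finset.image_id]
  have hcol : ∀ B' ∈ blocks,
      2 * ((univ : Finset P).filter
        (fun yp => yp ∈ B' ∧ FRelP G (yp, B') (x₀, B₀))).card = k := by
    intro B' hB'
    obtain ⟨O₁, O₂, hO1ne, hO2ne, hdisj, hunion, hcardeq, hstab1, hstab2, htr1, htr2⟩ :=
      hHFT.2 B' hB'
    set W := (univ : Finset P).filter
        (fun yp => yp ∈ B' ∧ FRelP G (yp, B') (x₀, B₀)) with hW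
    have hWmem : ∀ z, z ∈ W ↔ z ∈ B' ∧ FRelP G (z, B') (x₀, B₀) := by
      intro z; simp [hW]
    have hOk : O₁.card + O₂.card = k := by
      rw [← hD.block_size B' hB', ← hunion, Finset.card_union_of_disjoint hdisj]
    have hmemO : ∀ p ∈ B', p ∈ O₁ ∨ p ∈ O₂ := by
      intro p hp
      rw [← hunion] at hp
      exact Finset.mem_union.mp hp
    have hWne : W.Nonempty := by
      obtain ⟨g, hg, hgB⟩ := hHFT.1 B₀ hB₀ B' hB'
      refine ⟨g x₀, (hWmem _).mpr ⟨?_, frel_symm ⟨g, hg, rfl, hgB⟩⟩⟩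
      rw [← hgB]; exact Finset.mem_image_of_mem _ hx₀B₀
    have hWprop : ∃ z ∈ B', z ∉ W := by
      obtain ⟨g₁, hg₁, hg₁B⟩ := hHFT.1 B₁ hB₁ B' hB'
      refine ⟨g₁ x₀, by rw [← hg₁B]; exact Finset.mem_image_of_mem _ hx₀B₁, ?_⟩
      intro hmem
      have hfr := ((hWmem _).mp hmem).2
      exact hne (frel_symm (frel_trans ⟨g₁, hg₁, rfl, hg₁B⟩ hfr))
    have hWsat : ∀ a ∈ W, ∀ q : P, (∃ h ∈ G, B'.image ⇑h = B' ∧ h a = q) → q ∈ W := by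
      intro a ha q hq
      obtain ⟨h, hh, hhB, hha⟩ := hq
      have haW := (hWmem a).mp ha
      refine (hWmem q).mpr ⟨?_, ?_⟩
      · rw [← hha, ← hhB]; exact Finset.mem_image_of_mem _ haW.1
      · refine frel_trans (q := (a, B')) ⟨h⁻¹, G.inv_mem hh, by rw [← hha]; simp,
          hft_img_inv h hhB⟩ haW.2
    obtain ⟨a, ha⟩ := hWne
    have haB' : a ∈ B' := ((hWmem a).mp ha).1
    have hcase : W = O₁ ∨ W = O₂ := by
      rcases hmemO a haB' with haO | haO
      · left
        have hO1W : O₁ ⊆ W := fun q hq => hWsat a ha q (htr1 a haO q hq)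
        have hWO2 : ∀ z ∈ W, z ∉ O₂ := by
          intro z hz hzO2
          have hO2W : O₂ ⊆ W := fun q hq => hWsat z hz q (htr2 z hzO2 q hq)
          obtain ⟨w0, hw0B, hw0n⟩ := hWprop
          rcases hmemO w0 hw0B with h | h
          · exact hw0n (hO1W h)
          · exact hw0n (hO2W h)
        refine Finset.Subset.antisymm ?_ hO1W
        intro z hz
        rcases hmemO z (((hWmem z).mp hz).1) with h | h
        · exact h
        · exact absurd h (hWO2 z hz)
      · right
        have hO2W : O₂ ⊆ W := fun q hq => hWsat a ha q (htr2 a haO q hq)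
        have hWO1 : ∀ z ∈ W, z ∉ O₁ := by
          intro z hz hzO1
          have hO1W : O₁ ⊆ W := fun q hq => hWsat z hz q (htr1 z hzO1 q hq)
          obtain ⟨w0, hw0B, hw0n⟩ := hWprop
          rcases hmemO w0 hw0B with h | h
          · exact hw0n (hO1W h)
          · exact hw0n (hO2W h)
        refine Finset.Subset.antisymm ?_ hO2W
        intro z hz
        rcases hmemO z (((hWmem z).mp hz).1) with h | h
        · exact absurd h (hWO1 z hz)
        · exact h
    rcases hcase with h | h <;> rw [h] <;> omega
  have e1 : ∑ yp : P, (blocks.filter (fun B' => yp ∈ B' ∧ FRelP G (yp, B') (x₀, B₀))).card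
      = v * (blocks.filter (fun B => x₀ ∈ B ∧ FRelP G (x₀, B) (x₀, B₀))).card := by
    rw [Finset.sum_congr rfl (fun yp _ => hrow yp), Finset.sum_const, Finset.card_univ,
      hD.card_points, smul_eq_mul]
  have e2 := hft_dcount (univ : Finset P) blocks
    (fun yp B' => yp ∈ B' ∧ FRelP G (yp, B') (x₀, B₀))
  have e3 : 2 * ∑ B' ∈ blocks, ((univ : Finset P).filter
      (fun yp => yp ∈ B' ∧ FRelP G (yp, B') (x₀, B₀))).card = blocks.card * k := by
    rw [Finset.mul_sum, Finset.sum_congr rfl hcol, Finset.sum_const, smul_eq_mul]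
  rw [e1] at e2
  have e4 : 2 * (v * (blocks.filter (fun B => x₀ ∈ B ∧ FRelP G (x₀, B) (x₀, B₀))).card)
      = v * r := by
    rw [e2, e3, hbk]
  have e5 : v * (2 * (blocks.filter (fun B => x₀ ∈ B ∧ FRelP G (x₀, B) (x₀, B₀))).card)
      = v * r := by rw [← e4]; ring
  exact Nat.eq_of_mul_eq_mul_left hv0 e5


lemma hft_k_le_r {blocks : Finset (Finset P)} {v k lam r : ℕ}
    (hD : IsTwoDesign blocks v k lam r) : k ≤ r := by
  have hb := hft_bk hD
  have hf := hft_fisher hD (hft_rpos hD)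
  have hv0 : 0 < v := by have := hft_vpos hD; omega
  by_contra h'
  push_neg at h'
  have h1 : v * k ≤ blocks.card * k := Nat.mul_le_mul_right _ hf
  have h2 : v * r < v * k := Nat.mul_lt_mul_of_pos_left h' hv0
  omega

end HFTAux

theorem half_flag_transitive_point_primitive_of_lambda_ge_gcd_sq
    {P : Type*} [Fintype P] [DecidableEq P]
    (blocks : Finset (Finset P)) (v k lam r : ℕ)
    (hD : IsTwoDesign blocks v k lam r)
    (G : Subgroup (Equiv.Perm P))
    (hAut : IsAutGroup G blocks)
    (hHFT : HalfFlagTransitive G blocks)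
    (hlam : Nat.gcd r (2 * lam) ^ 2 ≤ lam) :
    PointPrimitive G := by
  classical
  have hlr := hft_rpos hD
  have hr0 : 0 < r := by omega
  have hv5 := hft_vpos hD
  have hv0 : 0 < v := by omega
  have hkr : k ≤ r := hft_k_le_r hD
  have hptrans := hft_ptrans hD hAut hHFT hlr
  refine ⟨hptrans, ?_⟩
  intro C hC
  by_contra hTriv
  unfold TrivialPartition at hTriv
  push_neg at hTriv
  obtain ⟨hnotall, hnotuniv⟩ := hTriv
  obtain ⟨c₀, hc₀C, hc₀card⟩ := hnotall
  obtain ⟨hCne, hCun, hCinv⟩ := hC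
  choose cl hcl huniq using hCun
  have hclC : ∀ x, cl x ∈ C := fun x => (hcl x).1
  have hxcl : ∀ x, x ∈ cl x := fun x => (hcl x).2
  have f1 : ∀ g ∈ G, ∀ x : P, (cl x).image ⇑g = cl (g x) := by
    intro g hg x
    exact huniq (g x) _ ⟨hCinv g hg _ (hclC x), Finset.mem_image_of_mem _ (hxcl x)⟩
  have f2 : ∀ x y : P, (cl x).card = (cl y).card := by
    intro x y
    obtain ⟨g, hg, hgxy⟩ := hptrans x y
    rw [← hgxy, ← f1 g hg x, Finset.card_image_of_injective _ (Equiv.injective _)]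
  have fclasses : ∀ c ∈ C, ∃ x : P, c = cl x := by
    intro c hc
    obtain ⟨x, hx⟩ := hCne c hc
    exact ⟨x, huniq x c ⟨hc, hx⟩⟩
  have hPn : Nonempty P := by
    rw [← Fintype.card_pos_iff, hD.card_points]; omega
  obtain ⟨x₀⟩ := hPn
  have hx₀Δ := hxcl x₀
  -- class size at least 2
  have hc2 : 2 ≤ (cl x₀).card := by
    obtain ⟨x₁, hx₁⟩ := fclasses c₀ hc₀C
    have h1 : 1 ≤ c₀.card := Finset.card_pos.mpr (hCne c₀ hc₀C)
    rw [hx₁] at hc₀card h1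
    have := f2 x₁ x₀
    omega
  -- partition counting : C.card * (cl x₀).card = v
  have hsum : ∑ p : P, (C.filter (fun cc => p ∈ cc)).card = v := by
    have step : ∀ p : P, C.filter (fun cc => p ∈ cc) = {cl p} := by
      intro p
      ext cc
      simp only [Finset.mem_filter, Finset.mem_singleton]
      constructor
      · rintro ⟨h1, h2⟩; exact huniq p cc ⟨h1, h2⟩
      · rintro rfl; exact ⟨hclC p, hxcl p⟩
    rw [Finset.sum_congr rfl (fun p _ => by rw [step p])]
    simp [Finset.card_univ, hD.card_points]
  have hdc : C.card * (cl x₀).card = v := by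
    have h := hft_dcount (univ : Finset P) C (fun p cc => p ∈ cc)
    have h2 : ∑ cc ∈ C, ((univ : Finset P).filter (fun p => p ∈ cc)).card
        = C.card * (cl x₀).card := by
      have step : ∀ cc ∈ C,
          ((univ : Finset P).filter (fun p => p ∈ cc)).card = (cl x₀).card := by
        intro cc hcc
        obtain ⟨x, rfl⟩ := fclasses cc hcc
        rw [Finset.filter_mem_eq_inter, Finset.univ_inter]
        exact f2 x x₀
      rw [Finset.sum_congr rfl step, Finset.sum_const, smul_eq_mul]
    rw [hsum] at h
    rw [← h2]
    exact h.symm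
  have hd2 : 2 ≤ C.card := by
    rcases Nat.lt_or_ge C.card 2 with h | h
    · have hcase : C.card = 0 ∨ C.card = 1 := by omega
      rcases hcase with h0 | h1
      · rw [h0] at hdc; omega
      · obtain ⟨a, haC⟩ := Finset.card_eq_one.mp h1
        have haCmem : a ∈ C := by rw [haC]; exact Finset.mem_singleton_self a
        have hccl : (cl x₀).card = v := by rw [h1, one_mul] at hdc; exact hdc
        have hacard : a.card = v := by
          obtain ⟨x, rfl⟩ := fclasses a haCmem
          rw [f2 x x₀]; exact hccl
        have hauniv : a = univ := by
          apply Finset.eq_univ_of_card; rw [hacard, hD.card_points]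
        rw [hauniv] at haC
        exact absurd haC hnotuniv
    · exact h
  -- step A : pair counting inside the class of x₀
  have hT : (blocks.filter (fun B => x₀ ∈ B)).card = r := hD.repl_count x₀
  have stepA : ((cl x₀).card - 1) * lam
      = ∑ B ∈ blocks.filter (fun B => x₀ ∈ B), ((B ∩ cl x₀).card - 1) := by
    have h := hft_dcount ((cl x₀).erase x₀) (blocks.filter (fun B => x₀ ∈ B))
      (fun y B => y ∈ B)
    have h1 : ∑ y ∈ (cl x₀).erase x₀,
        ((blocks.filter (fun B => x₀ ∈ B)).filter (fun B => y ∈ B)).card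
          = ((cl x₀).card - 1) * lam := by
      have step : ∀ y ∈ (cl x₀).erase x₀,
          ((blocks.filter (fun B => x₀ ∈ B)).filter (fun B => y ∈ B)).card = lam := by
        intro y hy
        rw [Finset.filter_filter]
        have hyx : y ≠ x₀ := Finset.ne_of_mem_erase hy
        rw [← hD.pair_count x₀ y hyx.symm]
      rw [Finset.sum_congr rfl step, Finset.sum_const, smul_eq_mul,
        Finset.card_erase_of_mem hx₀Δ]
    have h2step : ∀ B ∈ blocks.filter (fun B => x₀ ∈ B),
        (((cl x₀).erase x₀).filter (fun y => y ∈ B)).card = (B ∩ cl x₀).card - 1 := by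
      intro B hB
      rw [Finset.mem_filter] at hB
      have hset : ((cl x₀).erase x₀).filter (fun y => y ∈ B) = (B ∩ cl x₀).erase x₀ := by
        ext z
        simp only [Finset.mem_filter, Finset.mem_erase, Finset.mem_inter]
        tauto
      rw [hset, Finset.card_erase_of_mem (Finset.mem_inter.mpr ⟨hB.2, hx₀Δ⟩)]
    rw [h1] at h
    exact h.trans (Finset.sum_congr rfl h2step)
  -- a block meeting the class in at least two points
  obtain ⟨y₁, hy₁Δ, hy₁ne⟩ :=
    Finset.exists_mem_ne (show 1 < (cl x₀).card by omega) x₀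
  have hpair : 0 < (blocks.filter (fun B => x₀ ∈ B ∧ y₁ ∈ B)).card := by
    rw [hD.pair_count x₀ y₁ (Ne.symm hy₁ne)]; exact hD.lam_pos
  obtain ⟨B₂, hB₂⟩ := Finset.card_pos.mp hpair
  rw [Finset.mem_filter] at hB₂
  obtain ⟨hB₂blocks, hx₀B₂, hy₁B₂⟩ := hB₂
  have hB₂2 : 2 ≤ (B₂ ∩ cl x₀).card := by
    apply Finset.one_lt_card.mpr
    exact ⟨x₀, Finset.mem_inter.mpr ⟨hx₀B₂, hx₀Δ⟩, y₁,
      Finset.mem_inter.mpr ⟨hy₁B₂, hy₁Δ⟩, Ne.symm hy₁ne⟩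
  -- intersection sizes are invariant along flag equivalence at x₀
  have hval : ∀ B B' : Finset P, FRelP G (x₀, B) (x₀, B') →
      (B ∩ cl x₀).card = (B' ∩ cl x₀).card := by
    rintro B B' ⟨g, hg, hgx, hgB⟩
    have hgΔ : (cl x₀).image ⇑g = cl x₀ := by
      rw [f1 g hg x₀]
      simp only at hgx
      rw [hgx]
    have himg : (B ∩ cl x₀).image ⇑g = B' ∩ cl x₀ := by
      rw [Finset.image_inter _ _ (Equiv.injective _)]
      simp only at hgB
      rw [hgB, hgΔ]
    rw [← himg, Finset.card_image_of_injective _ (Equiv.injective _)]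
  -- key : r * s = (2 lam) (c - 1) for some positive s
  have hkey : ∃ s : ℕ, 0 < s ∧ r * s = (2 * lam) * ((cl x₀).card - 1) := by
    by_cases hone : ∀ B ∈ blocks.filter (fun B => x₀ ∈ B),
        ∀ B' ∈ blocks.filter (fun B => x₀ ∈ B), FRelP G (x₀, B) (x₀, B')
    · refine ⟨2 * ((B₂ ∩ cl x₀).card - 1), by omega, ?_⟩
      have hB₂T : B₂ ∈ blocks.filter (fun B => x₀ ∈ B) :=
        Finset.mem_filter.mpr ⟨hB₂blocks, hx₀B₂⟩
      have hsum2 : ∑ B ∈ blocks.filter (fun B => x₀ ∈ B), ((B ∩ cl x₀).card - 1)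
          = r * ((B₂ ∩ cl x₀).card - 1) := by
        rw [Finset.sum_congr rfl (fun B hB => by rw [hval B B₂ (hone B hB B₂ hB₂T)]),
          Finset.sum_const, smul_eq_mul, hT]
      have hsA := stepA.trans hsum2
      calc r * (2 * ((B₂ ∩ cl x₀).card - 1))
          = 2 * (r * ((B₂ ∩ cl x₀).card - 1)) := by ring
        _ = 2 * (((cl x₀).card - 1) * lam) := by rw [← hsA]
        _ = (2 * lam) * ((cl x₀).card - 1) := by ring
    · push_neg at hone
      obtain ⟨B₀, hB₀T, B₁, hB₁T, hne⟩ := hone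
      have hB₀T' := Finset.mem_filter.mp hB₀T
      have hB₁T' := Finset.mem_filter.mp hB₁T
      have hhalf0 : 2 * (blocks.filter
          (fun B => x₀ ∈ B ∧ FRelP G (x₀, B) (x₀, B₀))).card = r :=
        hft_half hD hAut hHFT hptrans (hft_bk hD) hv0 hB₀T'.1 hB₀T'.2 hB₁T'.1 hB₁T'.2 hne
      have hdisj : Disjoint (blocks.filter (fun B => x₀ ∈ B ∧ FRelP G (x₀, B) (x₀, B₀)))
          (blocks.filter (fun B => x₀ ∈ B ∧ FRelP G (x₀, B) (x₀, B₁))) := by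
        rw [Finset.disjoint_left]
        intro B hB0 hB1
        rw [Finset.mem_filter] at hB0 hB1
        exact hne (frel_trans (frel_symm hB0.2.2) hB1.2.2)
      have hun : (blocks.filter (fun B => x₀ ∈ B ∧ FRelP G (x₀, B) (x₀, B₀)))
          ∪ (blocks.filter (fun B => x₀ ∈ B ∧ FRelP G (x₀, B) (x₀, B₁)))
          = blocks.filter (fun B => x₀ ∈ B) := by
        apply Finset.Subset.antisymm
        · intro B hB
          rcases Finset.mem_union.mp hB with h | h <;>
            · rw [Finset.mem_filter] at h
              exact Finset.mem_filter.mpr ⟨h.1, h.2.1⟩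
        · intro B hB
          rw [Finset.mem_filter] at hB
          by_cases h0 : FRelP G (x₀, B) (x₀, B₀)
          · exact Finset.mem_union_left _ (Finset.mem_filter.mpr ⟨hB.1, hB.2, h0⟩)
          · refine Finset.mem_union_right _ (Finset.mem_filter.mpr ⟨hB.1, hB.2, ?_⟩)
            exact hft_two hHFT hB.1 hB.2 hB₁T'.1 hB₁T'.2 hB₀T'.1 hB₀T'.2 h0
              (fun h => hne (frel_symm h))
      have hcards : (blocks.filter (fun B => x₀ ∈ B ∧ FRelP G (x₀, B) (x₀, B₀))).card
          + (blocks.filter (fun B => x₀ ∈ B ∧ FRelP G (x₀, B) (x₀, B₁))).card = r := by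
        rw [← Finset.card_union_of_disjoint hdisj, hun, hT]
      have hhalf1 : 2 * (blocks.filter
          (fun B => x₀ ∈ B ∧ FRelP G (x₀, B) (x₀, B₁))).card = r := by omega
      have hsum2 : ∑ B ∈ blocks.filter (fun B => x₀ ∈ B), ((B ∩ cl x₀).card - 1)
          = (blocks.filter (fun B => x₀ ∈ B ∧ FRelP G (x₀, B) (x₀, B₀))).card
              * ((B₀ ∩ cl x₀).card - 1)
            + (blocks.filter (fun B => x₀ ∈ B ∧ FRelP G (x₀, B) (x₀, B₁))).card
              * ((B₁ ∩ cl x₀).card - 1) := by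
        rw [← hun, Finset.sum_union hdisj]
        congr 1
        · rw [Finset.sum_congr rfl
            (fun B hB => by rw [hval B B₀ ((Finset.mem_filter.mp hB).2.2)]),
            Finset.sum_const, smul_eq_mul]
        · rw [Finset.sum_congr rfl
            (fun B hB => by rw [hval B B₁ ((Finset.mem_filter.mp hB).2.2)]),
            Finset.sum_const, smul_eq_mul]
      refine ⟨((B₀ ∩ cl x₀).card - 1) + ((B₁ ∩ cl x₀).card - 1), ?_, ?_⟩
      · have hB₂T : B₂ ∈ blocks.filter (fun B => x₀ ∈ B) :=
          Finset.mem_filter.mpr ⟨hB₂blocks, hx₀B₂⟩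
        have hB₂un : B₂ ∈ (blocks.filter (fun B => x₀ ∈ B ∧ FRelP G (x₀, B) (x₀, B₀)))
            ∪ (blocks.filter (fun B => x₀ ∈ B ∧ FRelP G (x₀, B) (x₀, B₁))) := by
          rw [hun]; exact hB₂T
        rcases Finset.mem_union.mp hB₂un with h | h
        · have := hval B₂ B₀ ((Finset.mem_filter.mp h).2.2); omega
        · have := hval B₂ B₁ ((Finset.mem_filter.mp h).2.2); omega
      · calc r * (((B₀ ∩ cl x₀).card - 1) + ((B₁ ∩ cl x₀).card - 1))
            = (2 * (blocks.filter (fun B => x₀ ∈ B ∧ FRelP G (x₀, B) (x₀, B₀))).card)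
                * ((B₀ ∩ cl x₀).card - 1)
              + (2 * (blocks.filter (fun B => x₀ ∈ B ∧ FRelP G (x₀, B) (x₀, B₁))).card)
                * ((B₁ ∩ cl x₀).card - 1) := by rw [hhalf0, hhalf1]; ring
          _ = 2 * ((blocks.filter (fun B => x₀ ∈ B ∧ FRelP G (x₀, B) (x₀, B₀))).card
                * ((B₀ ∩ cl x₀).card - 1)
              + (blocks.filter (fun B => x₀ ∈ B ∧ FRelP G (x₀, B) (x₀, B₁))).card
                * ((B₁ ∩ cl x₀).card - 1)) := by ring
          _ = 2 * (((cl x₀).card - 1) * lam) := by rw [← hsum2, ← stepA]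
          _ = (2 * lam) * ((cl x₀).card - 1) := by ring
  obtain ⟨s, hs0, hseq⟩ := hkey
  -- divisibility
  have hgcd0 : 0 < Nat.gcd r (2 * lam) := Nat.gcd_pos_of_pos_left _ hr0
  have hdvd_helper : ∀ s' t' : ℕ, r * s' = (2 * lam) * t' →
      (r / Nat.gcd r (2 * lam)) ∣ t' := by
    intro s' t' heq
    have h1 : Nat.gcd r (2 * lam) * (r / Nat.gcd r (2 * lam)) = r :=
      Nat.mul_div_cancel' (Nat.gcd_dvd_left _ _)
    have h2 : Nat.gcd r (2 * lam) * ((2 * lam) / Nat.gcd r (2 * lam)) = 2 * lam :=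
      Nat.mul_div_cancel' (Nat.gcd_dvd_right _ _)
    have h3 : Nat.gcd r (2 * lam) * ((r / Nat.gcd r (2 * lam)) * s')
        = Nat.gcd r (2 * lam) * (((2 * lam) / Nat.gcd r (2 * lam)) * t') := by
      rw [← mul_assoc, ← mul_assoc, h1, h2]; exact heq
    have h4 := Nat.eq_of_mul_eq_mul_left hgcd0 h3
    have cop : Nat.Coprime (r / Nat.gcd r (2 * lam)) ((2 * lam) / Nat.gcd r (2 * lam)) :=
      Nat.coprime_div_gcd_div_gcd hgcd0
    have hd : (r / Nat.gcd r (2 * lam)) ∣ ((2 * lam) / Nat.gcd r (2 * lam)) * t' := by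
      rw [← h4]; exact Dvd.intro _ rfl
    exact cop.dvd_of_dvd_mul_left hd
  have hdvd1 : (r / Nat.gcd r (2 * lam)) ∣ ((cl x₀).card - 1) := hdvd_helper s _ hseq
  have hdvd2 : (r / Nat.gcd r (2 * lam)) ∣ (v - 1) := by
    apply hdvd_helper (2 * (k - 1))
    have hrp := hft_repl hD
    calc r * (2 * (k - 1)) = 2 * (r * (k - 1)) := by ring
      _ = 2 * (lam * (v - 1)) := by rw [hrp]
      _ = (2 * lam) * (v - 1) := by ring
  obtain ⟨c1, hc1⟩ : ∃ c1, (cl x₀).card = c1 + 1 := ⟨(cl x₀).card - 1, by omega⟩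
  obtain ⟨d1, hd1⟩ : ∃ d1, C.card = d1 + 1 := ⟨C.card - 1, by omega⟩
  have hc1pos : 1 ≤ c1 := by omega
  have hd1pos : 1 ≤ d1 := by omega
  have hv : v = d1 * c1 + d1 + c1 + 1 := by rw [← hdc, hd1, hc1]; ring
  rw [hc1] at hdvd1
  have hdvd1' : (r / Nat.gcd r (2 * lam)) ∣ c1 := by simpa using hdvd1
  have hdvd2' : (r / Nat.gcd r (2 * lam)) ∣ d1 * c1 + d1 + c1 := by
    have hvv : v - 1 = d1 * c1 + d1 + c1 := by omega
    rwa [hvv] at hdvd2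
  have hdvdm : (r / Nat.gcd r (2 * lam)) ∣ d1 * c1 + c1 :=
    Nat.dvd_add (Dvd.dvd.mul_left hdvd1' d1) hdvd1'
  have hdvd3 : (r / Nat.gcd r (2 * lam)) ∣ d1 := by
    have h := Nat.dvd_sub hdvd2' hdvdm
    have heq : d1 * c1 + d1 + c1 - (d1 * c1 + c1) = d1 := by omega
    rwa [heq] at h
  have hq1 : r / Nat.gcd r (2 * lam) ≤ c1 := Nat.le_of_dvd hc1pos hdvd1'
  have hq2 : r / Nat.gcd r (2 * lam) ≤ d1 := Nat.le_of_dvd hd1pos hdvd3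
  have hgq : Nat.gcd r (2 * lam) * (r / Nat.gcd r (2 * lam)) = r :=
    Nat.mul_div_cancel' (Nat.gcd_dvd_left _ _)
  have hgg : Nat.gcd r (2 * lam) * Nat.gcd r (2 * lam) ≤ lam := by
    have := hlam
    rwa [pow_two] at this
  -- rename to opaque variables
  obtain ⟨q0, hq0def⟩ : ∃ q0, r / Nat.gcd r (2 * lam) = q0 := ⟨_, rfl⟩
  obtain ⟨g0, hg0def⟩ : ∃ g0, Nat.gcd r (2 * lam) = g0 := ⟨_, rfl⟩
  rw [hq0def, hg0def] at hgq
  rw [hg0def] at hgg hgcd0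
  rw [hq0def] at hq1 hq2
  -- final contradiction
  have hA : lam * (v - 1) ≤ r * r := by
    rw [← hft_repl hD]
    exact Nat.mul_le_mul (le_refl r) (by omega)
  have hB2 : q0 * q0 + 2 * q0 ≤ v - 1 := by
    have hqq : q0 * q0 ≤ d1 * c1 := Nat.mul_le_mul hq2 hq1
    omega
  have hC2 : (g0 * g0) * (q0 * q0 + 2 * q0) ≤ lam * (v - 1) := Nat.mul_le_mul hgg hB2
  have hD2 : (g0 * g0) * (q0 * q0 + 2 * q0) = r * r + 2 * (g0 * r) := by
    rw [← hgq]; ring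
  have hE : r ≤ g0 * r := Nat.le_mul_of_pos_left r hgcd0
  omega
end

section
/- Let D = (P, B) be a nontrivial 2-(v,k,λ) design with replication number r, and let G ≤ Aut(D) be a half-flag-transitive automorphism group of D. If r > 4λ(k-2), then G is point-primitive on P. -/
open Finset

section helpers
variable {P : Type*} [Fintype P] [DecidableEq P]

private lemma sum_over_blocks_eq (blocks : Finset (Finset P)) (f : P → Finset P → ℕ) :
    ∑ B ∈ blocks, ∑ x ∈ B, f x B
      = ∑ x : P, ∑ B ∈ blocks.filter (fun B => x ∈ B), f x B := by
  have h1 : ∀ B ∈ blocks, ∑ x ∈ B, f x B = ∑ x : P, if x ∈ B then f x B else 0 := by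
    intro B _
    rw [Finset.sum_ite_mem, Finset.univ_inter]
  rw [Finset.sum_congr rfl h1, Finset.sum_comm]
  exact Finset.sum_congr rfl fun x _ => (Finset.sum_filter _ _).symm

private lemma count_inter (blocks : Finset (Finset P)) (lam r : ℕ)
    (hpair : ∀ x y : P, x ≠ y → (blocks.filter fun B => x ∈ B ∧ y ∈ B).card = lam)
    (hrep : ∀ x : P, (blocks.filter fun B => x ∈ B).card = r)
    (x : P) (S : Finset P) :
    ∑ B ∈ blocks.filter (fun B => x ∈ B), (B ∩ S).card
      = lam * (S.erase x).card + (if x ∈ S then r else 0) := by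
  have h1 : ∀ B ∈ blocks.filter (fun B => x ∈ B), (B ∩ S).card
      = ∑ y ∈ S, if y ∈ B then 1 else 0 := by
    intro B _
    rw [Finset.sum_ite_mem, Finset.inter_comm S B, Finset.card_eq_sum_ones]
  rw [Finset.sum_congr rfl h1, Finset.sum_comm]
  have h2 : ∀ y : P, (∑ B ∈ blocks.filter (fun B => x ∈ B), if y ∈ B then 1 else 0)
      = (blocks.filter fun B => x ∈ B ∧ y ∈ B).card := by
    intro y
    rw [← Finset.sum_filter, Finset.filter_filter, Finset.card_eq_sum_ones]
  rw [Finset.sum_congr rfl fun y _ => h2 y]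
  by_cases hx : x ∈ S
  · rw [← Finset.insert_erase hx, Finset.sum_insert (Finset.notMem_erase x S)]
    have hxx : (blocks.filter fun B => x ∈ B ∧ x ∈ B).card = r := by
      simpa using hrep x
    have herase : ∀ y ∈ S.erase x,
        (blocks.filter fun B => x ∈ B ∧ y ∈ B).card = lam := by
      intro y hy
      exact hpair x y (Ne.symm (Finset.ne_of_mem_erase hy))
    rw [Finset.sum_congr rfl herase, Finset.sum_const, smul_eq_mul]
    have hins : insert x (S.erase x) = S := Finset.insert_erase hx
    rw [hins]
    simp only [hx, if_true, hxx]
    ring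
  · have herase : S.erase x = S := Finset.erase_eq_of_notMem hx
    have hall : ∀ y ∈ S, (blocks.filter fun B => x ∈ B ∧ y ∈ B).card = lam := by
      intro y hy
      exact hpair x y (fun h => hx (h ▸ hy))
    rw [Finset.sum_congr rfl hall, Finset.sum_const, smul_eq_mul, herase]
    simp [hx, mul_comm]

end helpers


open Finset

set_option maxHeartbeats 2000000 in
theorem half_flag_transitive_point_primitive_of_r_gt
    {P : Type*} [Fintype P] [DecidableEq P]
    (blocks : Finset (Finset P)) (v k lam r : ℕ)
    (hD : IsTwoDesign blocks v k lam r)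
    (G : Subgroup (Equiv.Perm P))
    (hAut : IsAutGroup G blocks)
    (hHFT : HalfFlagTransitive G blocks)
    (hr : r > 4 * lam * (k - 2)) :
    PointPrimitive G := by
  classical
  obtain ⟨hcard, hbs, hlam, hpair, hrep, hkgt, hklt⟩ := hD
  -- basic numeric facts
  have hv5 : 5 ≤ v := by omega
  have hvP : 1 < Fintype.card P := by omega
  have hrpos : 0 < r := by
    have h1 : 1 ≤ lam := hlam
    have h2 : 1 ≤ k - 2 := by omega
    nlinarith
  -- blocks are nonempty
  have hbne : blocks.Nonempty := by
    obtain ⟨a, b, hab⟩ := Fintype.exists_pair_of_one_lt_card hvP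
    have := hpair a b hab
    have hpos : 0 < (blocks.filter fun B => a ∈ B ∧ b ∈ B).card := by omega
    obtain ⟨B, hB⟩ := Finset.card_pos.mp hpos
    exact ⟨B, Finset.mem_of_mem_filter B hB⟩
  -- basic count : r * k = lam * (v - 1) + r
  have hbasic : r * k = lam * (v - 1) + r := by
    obtain ⟨x0⟩ := Fintype.card_pos_iff.mp (by omega : 0 < Fintype.card P)
    have h := count_inter blocks lam r hpair hrep x0 Finset.univ
    have hL : ∑ B ∈ blocks.filter (fun B => x0 ∈ B), (B ∩ Finset.univ).card
        = r * k := by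
      rw [Finset.sum_congr rfl (fun B hB => by
        rw [Finset.inter_univ, hbs B (Finset.mem_of_mem_filter B hB)])]
      rw [Finset.sum_const, smul_eq_mul, hrep x0]
    rw [hL] at h
    simpa [Finset.card_erase_of_mem, Finset.card_univ, hcard] using h
  -- point-transitivity
  have htrans : ∀ x y : P, ∃ g ∈ G, g x = y := by
    by_contra hcon
    push_neg at hcon
    obtain ⟨x, y, hxy⟩ := hcon
    set Q : Finset P := Finset.univ.filter (fun z => ∃ g ∈ G, g x = z) with hQdef
    have hxQ : x ∈ Q := by
      simp only [hQdef, Finset.mem_filter, Finset.mem_univ, true_and]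
      exact ⟨1, G.one_mem, rfl⟩
    have hyQ : y ∉ Q := by
      simp only [hQdef, Finset.mem_filter, Finset.mem_univ, true_and]
      push_neg
      exact hxy
    have hQg : ∀ g ∈ G, Q.image ⇑g = Q := by
      intro g hg
      ext z
      simp only [Finset.mem_image, hQdef, Finset.mem_filter, Finset.mem_univ, true_and]
      constructor
      · rintro ⟨w, ⟨h, hh, rfl⟩, rfl⟩
        exact ⟨g * h, G.mul_mem hg hh, rfl⟩
      · rintro ⟨h, hh, rfl⟩
        exact ⟨(g⁻¹ * h) x, ⟨g⁻¹ * h, G.mul_mem (G.inv_mem hg) hh, rfl⟩, by simp⟩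
    -- |B ∩ Q| is constant over blocks
    obtain ⟨B0, hB0⟩ := hbne
    set K := (B0 ∩ Q).card with hKdef
    have hKconst : ∀ B ∈ blocks, (B ∩ Q).card = K := by
      intro B hB
      obtain ⟨g, hg, hgB⟩ := hHFT.1 B hB B0 hB0
      have : (B ∩ Q).image ⇑g = B0 ∩ Q := by
        rw [Finset.image_inter _ _ g.injective, hgB, hQg g hg]
      rw [hKdef, ← this, Finset.card_image_of_injective _ g.injective]
    have hsum : ∀ w : P, ∑ B ∈ blocks.filter (fun B => w ∈ B), (B ∩ Q).card = r * K := by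
      intro w
      rw [Finset.sum_congr rfl (fun B hB => hKconst B (Finset.mem_of_mem_filter B hB)),
        Finset.sum_const, smul_eq_mul, hrep w]
    have e1 := count_inter blocks lam r hpair hrep x Q
    have e2 := count_inter blocks lam r hpair hrep y Q
    rw [hsum x] at e1
    rw [hsum y] at e2
    rw [if_pos hxQ] at e1
    rw [if_neg hyQ, Finset.erase_eq_of_notMem hyQ] at e2
    rw [Finset.card_erase_of_mem hxQ] at e1
    have hQpos : 1 ≤ Q.card := Finset.card_pos.mpr ⟨x, hxQ⟩
    obtain ⟨m, hm⟩ : ∃ m, Q.card = m + 1 := ⟨Q.card - 1, by omega⟩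
    rw [hm] at e1 e2
    simp only [Nat.add_sub_cancel] at e1
    rw [Nat.mul_add, Nat.mul_one] at e2
    have hrl : r = lam := by
      rw [e2] at e1
      omega
    -- now r = lam gives v = k, contradiction
    rw [hrl] at hbasic
    have hvk : lam * k = lam * v := by
      have : lam * (v - 1) + lam = lam * v := by
        rw [← Nat.mul_succ]
        congr 1
        omega
      omega
    have : k = v := Nat.eq_of_mul_eq_mul_left hlam hvk
    omega
  constructor
  · exact htrans
  intro C hC
  by_contra hnt
  obtain ⟨hCne, hCuniq, hCg⟩ := hC
  rw [TrivialPartition] at hnt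
  push_neg at hnt
  obtain ⟨hns, hCuniv⟩ := hnt
  -- the class function
  have hex : ∀ x : P, ∃ Δ, Δ ∈ C ∧ x ∈ Δ := fun x => (hCuniq x).exists
  choose cls hclsC hclsm using hex
  have huniq : ∀ (x : P) (Δ : Finset P), Δ ∈ C → x ∈ Δ → Δ = cls x :=
    fun x Δ h1 h2 => (hCuniq x).unique ⟨h1, h2⟩ ⟨hclsC x, hclsm x⟩
  have hclsg : ∀ g ∈ G, ∀ x : P, (cls x).image ⇑g = cls (g x) := by
    intro g hg x
    exact huniq (g x) _ (hCg g hg _ (hclsC x)) (Finset.mem_image_of_mem _ (hclsm x))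
  obtain ⟨x0⟩ := Fintype.card_pos_iff.mp (by omega : 0 < Fintype.card P)
  set c := (cls x0).card with hcdef
  have hcx : ∀ x : P, (cls x).card = c := by
    intro x
    obtain ⟨g, hg, hgx⟩ := htrans x0 x
    have h1 : (cls x0).image ⇑g = cls x := by rw [hclsg g hg x0, hgx]
    rw [← h1, Finset.card_image_of_injective _ g.injective]
  have hc2 : 2 ≤ c := by
    obtain ⟨Δ, hΔC, hΔ1⟩ := hns
    obtain ⟨z, hz⟩ := hCne Δ hΔC
    have h1 : Δ = cls z := huniq z Δ hΔC hz
    have h2 : 1 ≤ Δ.card := Finset.card_pos.mpr ⟨z, hz⟩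
    have h3 : Δ.card = c := by rw [h1, hcx]
    omega
  set d := C.card with hddef
  have hclassconst : ∀ Δ ∈ C, Δ.card = c := by
    intro Δ hΔ
    obtain ⟨z, hz⟩ := hCne Δ hΔ
    rw [huniq z Δ hΔ hz, hcx]
  have hfilter1 : ∀ x : P, (C.filter fun Δ => x ∈ Δ) = {cls x} := by
    intro x
    apply Finset.eq_singleton_iff_unique_mem.mpr
    refine ⟨Finset.mem_filter.mpr ⟨hclsC x, hclsm x⟩, ?_⟩
    intro Δ hΔ
    obtain ⟨h1, h2⟩ := Finset.mem_filter.mp hΔ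
    exact huniq x Δ h1 h2
  have hvdc : v = d * c := by
    have h1 : ∑ Δ ∈ C, Δ.card = d * c := by
      rw [Finset.sum_congr rfl hclassconst, Finset.sum_const, smul_eq_mul]
    have h2 : ∑ Δ ∈ C, Δ.card = Fintype.card P := by
      have h3 : ∀ Δ ∈ C, Δ.card = ∑ x : P, if x ∈ Δ then 1 else 0 := by
        intro Δ _
        rw [Finset.sum_ite_mem, Finset.univ_inter, Finset.card_eq_sum_ones]
      rw [Finset.sum_congr rfl h3, Finset.sum_comm]
      have h4 : ∀ x : P, (∑ Δ ∈ C, if x ∈ Δ then 1 else 0) = 1 := by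
        intro x
        rw [← Finset.sum_filter, hfilter1 x, Finset.sum_singleton]
      rw [Finset.sum_congr rfl fun x _ => h4 x]
      simp [Finset.card_univ]
    rw [← hcard, ← h2, h1]
  have hd2 : 2 ≤ d := by
    have hdpos : 1 ≤ d := Finset.card_pos.mpr ⟨cls x0, hclsC x0⟩
    by_contra hlt
    push_neg at hlt
    have hd1 : d = 1 := by omega
    obtain ⟨Δ, hΔ⟩ := Finset.card_eq_one.mp hd1
    apply hCuniv
    have hΔu : Δ = Finset.univ := by
      apply Finset.eq_univ_iff_forall.mpr
      intro z
      have h5 : cls z ∈ ({Δ} : Finset (Finset P)) := hΔ ▸ hclsC z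
      have h6 : cls z = Δ := Finset.mem_singleton.mp h5
      exact h6 ▸ hclsm z
    rw [hΔ, hΔu]
  -- W B := ∑ x ∈ B, |B ∩ cls x| is constant over blocks
  have hWconst : ∀ B ∈ blocks, ∀ B' ∈ blocks,
      (∑ x ∈ B, (B ∩ cls x).card) = ∑ x ∈ B', (B' ∩ cls x).card := by
    intro B hB B' hB'
    obtain ⟨g, hg, hgB⟩ := hHFT.1 B hB B' hB'
    have h1 : ∑ x ∈ B', (B' ∩ cls x).card = ∑ x ∈ B, (B' ∩ cls (g x)).card := by
      rw [← hgB, Finset.sum_image (fun a _ b _ h => g.injective h)]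
    rw [h1]
    apply Finset.sum_congr rfl
    intro x _
    have h2 : B' ∩ cls (g x) = (B ∩ cls x).image ⇑g := by
      rw [← hclsg g hg x, Finset.image_inter _ _ g.injective, hgB]
    rw [h2, Finset.card_image_of_injective _ g.injective]
  -- per block, 2 * W B = k * M with M ≥ 2
  have hWhalf : ∀ B ∈ blocks, ∃ M : ℕ, 2 ≤ M ∧
      2 * (∑ x ∈ B, (B ∩ cls x).card) = k * M := by
    intro B hB
    obtain ⟨O₁, O₂, hO1ne, hO2ne, hdisj, hunion, hOcard, _, _, htr1, htr2⟩ := hHFT.2 B hB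
    obtain ⟨x₁, hx₁⟩ := hO1ne
    obtain ⟨x₂, hx₂⟩ := hO2ne
    set f : P → ℕ := fun x => (B ∩ cls x).card with hfdef
    have hconst : ∀ (O : Finset P) (w : P), w ∈ O →
        (∀ x ∈ O, ∀ y ∈ O, ∃ g ∈ G, B.image ⇑g = B ∧ g x = y) →
        ∀ x ∈ O, f x = f w := by
      intro O w hw htr x hx
      obtain ⟨g, hg, hgB, hgx⟩ := htr x hx w hw
      have h2 : B ∩ cls w = (B ∩ cls x).image ⇑g := by
        rw [← hgx, ← hclsg g hg x, Finset.image_inter _ _ g.injective, hgB]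
      simp only [hfdef]
      rw [h2, Finset.card_image_of_injective _ g.injective]
    have hsplit : ∑ x ∈ B, f x = O₁.card * f x₁ + O₂.card * f x₂ := by
      rw [← hunion, Finset.sum_union hdisj]
      rw [Finset.sum_congr rfl (hconst O₁ x₁ hx₁ htr1), Finset.sum_const, smul_eq_mul,
        Finset.sum_congr rfl (hconst O₂ x₂ hx₂ htr2), Finset.sum_const, smul_eq_mul]
    have hk : O₁.card + O₂.card = k := by
      rw [← Finset.card_union_of_disjoint hdisj, hunion]
      exact hbs B hB
    have h2a : 2 * O₁.card = k := by omega
    have h2b : 2 * O₂.card = k := by omega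
    have hx₁B : x₁ ∈ B := by rw [← hunion]; exact Finset.mem_union_left _ hx₁
    have hx₂B : x₂ ∈ B := by rw [← hunion]; exact Finset.mem_union_right _ hx₂
    have hf1 : 1 ≤ f x₁ :=
      Finset.card_pos.mpr ⟨x₁, Finset.mem_inter.mpr ⟨hx₁B, hclsm x₁⟩⟩
    have hf2 : 1 ≤ f x₂ :=
      Finset.card_pos.mpr ⟨x₂, Finset.mem_inter.mpr ⟨hx₂B, hclsm x₂⟩⟩
    refine ⟨f x₁ + f x₂, by omega, ?_⟩
    rw [hsplit]
    calc 2 * (O₁.card * f x₁ + O₂.card * f x₂)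
        = (2 * O₁.card) * f x₁ + (2 * O₂.card) * f x₂ := by ring
      _ = k * f x₁ + k * f x₂ := by rw [h2a, h2b]
      _ = k * (f x₁ + f x₂) := by ring
  obtain ⟨B0, hB0⟩ := hbne
  obtain ⟨M, hM2, hMk⟩ := hWhalf B0 hB0
  have hT1 : ∑ B ∈ blocks, ∑ x ∈ B, (B ∩ cls x).card
      = blocks.card * (∑ x ∈ B0, (B0 ∩ cls x).card) := by
    rw [Finset.sum_congr rfl (fun B hB => hWconst B hB B0 hB0), Finset.sum_const,
      smul_eq_mul]
  have hT2 : ∑ B ∈ blocks, ∑ x ∈ B, (B ∩ cls x).card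
      = Fintype.card P * (lam * (c - 1) + r) := by
    rw [sum_over_blocks_eq blocks (fun x B => (B ∩ cls x).card)]
    have h1 : ∀ x : P, (∑ B ∈ blocks.filter (fun B => x ∈ B), (B ∩ cls x).card)
        = lam * (c - 1) + r := by
      intro x
      have h := count_inter blocks lam r hpair hrep x (cls x)
      rw [if_pos (hclsm x), Finset.card_erase_of_mem (hclsm x), hcx x] at h
      exact h
    rw [Finset.sum_congr rfl (fun x _ => h1 x), Finset.sum_const, smul_eq_mul,
      Finset.card_univ]
  have hbk : blocks.card * k = Fintype.card P * r := by
    have h1 : ∑ B ∈ blocks, ∑ _x ∈ B, (1:ℕ) = blocks.card * k := by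
      rw [Finset.sum_congr rfl (fun B hB => by
        rw [Finset.sum_const, smul_eq_mul, mul_one, hbs B hB])]
      rw [Finset.sum_const, smul_eq_mul]
    have h2 : ∑ B ∈ blocks, ∑ _x ∈ B, (1:ℕ) = Fintype.card P * r := by
      rw [sum_over_blocks_eq blocks (fun _x _B => (1:ℕ))]
      rw [Finset.sum_congr rfl (fun x (_ : x ∈ Finset.univ) => by
        rw [Finset.sum_const, smul_eq_mul, mul_one, hrep x])]
      rw [Finset.sum_const, smul_eq_mul, Finset.card_univ]
    rw [← h1, h2]
  have hmain : 2 * (lam * (c - 1)) + 2 * r = r * M := by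
    have h3 : 2 * (Fintype.card P * (lam * (c - 1) + r)) = blocks.card * (k * M) := by
      rw [← hT2, hT1]
      rw [show blocks.card * (k * M) = blocks.card * (2 * (∑ x ∈ B0, (B0 ∩ cls x).card))
        from by rw [← hMk]]
      ring
    have h4 : blocks.card * (k * M) = Fintype.card P * (r * M) := by
      rw [← Nat.mul_assoc, hbk, Nat.mul_assoc]
    rw [h4] at h3
    have h5 : Fintype.card P * (2 * (lam * (c - 1)) + 2 * r)
        = Fintype.card P * (r * M) := by rw [← h3]; ring
    exact Nat.eq_of_mul_eq_mul_left (by omega) h5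
  obtain ⟨N, hNM⟩ : ∃ N, M = N + 2 := ⟨M - 2, by omega⟩
  have hrN : r * N = 2 * (lam * (c - 1)) := by
    rw [hNM, Nat.mul_add] at hmain
    have : r * 2 = 2 * r := by ring
    linarith
  have hprodpos : 1 ≤ lam * (c - 1) :=
    Nat.one_le_iff_ne_zero.mpr (Nat.mul_ne_zero (by omega) (by omega))
  have hN1 : 1 ≤ N := by
    rcases Nat.eq_zero_or_pos N with h | h
    · rw [h, Nat.mul_zero] at hrN
      linarith
    · exact h
  -- final integer arithmetic
  zify [show 1 ≤ c by omega] at hrN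
  zify [show 1 ≤ v by omega] at hbasic
  zify [show 2 ≤ k by omega] at hr
  have hb1 : (1:ℤ) ≤ (lam:ℤ) := by exact_mod_cast hlam
  have hkZ : (3:ℤ) ≤ (k:ℤ) := by exact_mod_cast hkgt
  have hcZ : (2:ℤ) ≤ (c:ℤ) := by exact_mod_cast hc2
  have hdZ : (2:ℤ) ≤ (d:ℤ) := by exact_mod_cast hd2
  have hNZ : (1:ℤ) ≤ (N:ℤ) := by exact_mod_cast hN1
  have hvZ : (v:ℤ) = (d:ℤ) * (c:ℤ) := by exact_mod_cast hvdc
  have hv1Z : (1:ℤ) ≤ (v:ℤ) := by exact_mod_cast (show 1 ≤ v by omega)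
  have h7 : (lam:ℤ) * ((v:ℤ) - 1) = (r:ℤ) * ((k:ℤ) - 1) := by linear_combination -hbasic
  have hkey : (N:ℤ) * ((d:ℤ) * (c:ℤ) - 1) = 2 * ((c:ℤ) - 1) * ((k:ℤ) - 1) := by
    have h6 : (lam:ℤ) * ((N:ℤ) * ((v:ℤ) - 1)) = (lam:ℤ) * (2 * ((c:ℤ) - 1) * ((k:ℤ) - 1)) := by
      calc (lam:ℤ) * ((N:ℤ) * ((v:ℤ) - 1)) = (N:ℤ) * ((lam:ℤ) * ((v:ℤ) - 1)) := by ring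
        _ = (N:ℤ) * ((r:ℤ) * ((k:ℤ) - 1)) := by rw [h7]
        _ = ((r:ℤ) * (N:ℤ)) * ((k:ℤ) - 1) := by ring
        _ = (2 * ((lam:ℤ) * ((c:ℤ) - 1))) * ((k:ℤ) - 1) := by rw [hrN]
        _ = (lam:ℤ) * (2 * ((c:ℤ) - 1) * ((k:ℤ) - 1)) := by ring
    have h8 := mul_left_cancel₀ (by linarith : (lam:ℤ) ≠ 0) h6
    rw [← hvZ]
    exact h8
  have hNk : (N:ℤ) ≤ (k:ℤ) - 2 := by
    have h10 : (2:ℤ) * (c:ℤ) - 1 ≤ (d:ℤ) * (c:ℤ) - 1 := by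
      have := mul_le_mul_of_nonneg_right hdZ (by linarith : (0:ℤ) ≤ (c:ℤ))
      linarith
    have h11 : (N:ℤ) * (2 * (c:ℤ) - 1) ≤ (N:ℤ) * ((d:ℤ) * (c:ℤ) - 1) :=
      mul_le_mul_of_nonneg_left h10 (by linarith)
    by_contra hcon2
    push_neg at hcon2
    have h9 : (k:ℤ) - 1 ≤ (N:ℤ) := by omega
    have h12 : ((k:ℤ) - 1) * (2 * (c:ℤ) - 1) ≤ (N:ℤ) * (2 * (c:ℤ) - 1) :=
      mul_le_mul_of_nonneg_right h9 (by linarith)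
    have h14 : ((k:ℤ) - 1) * (2 * (c:ℤ) - 1) - 2 * ((c:ℤ) - 1) * ((k:ℤ) - 1)
        = (k:ℤ) - 1 := by ring
    linarith [hkey, h11, h12, h14, hkZ]
  have hw : 2 * ((k:ℤ) - 1) - (N:ℤ) = (c:ℤ) * (2 * ((k:ℤ) - 1) - (N:ℤ) * (d:ℤ)) := by
    linear_combination hkey
  have hcle : (c:ℤ) ≤ 2 * ((k:ℤ) - 1) - (N:ℤ) := by
    have hw1 : 1 ≤ 2 * ((k:ℤ) - 1) - (N:ℤ) * (d:ℤ) := by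
      by_contra hcon3
      push_neg at hcon3
      have h15 := mul_le_mul_of_nonneg_left
        (show 2 * ((k:ℤ) - 1) - (N:ℤ) * (d:ℤ) ≤ 0 by linarith)
        (show (0:ℤ) ≤ (c:ℤ) by linarith)
      rw [mul_zero] at h15
      linarith [hw, hNk, hkZ]
    have h16 := mul_le_mul_of_nonneg_left hw1 (show (0:ℤ) ≤ (c:ℤ) by linarith)
    rw [mul_one] at h16
    linarith [hw]
  have hfin1 : (r:ℤ) * (N:ℤ) ≤ 2 * (lam:ℤ) * (2 * (k:ℤ) - 3 - (N:ℤ)) := by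
    have h17 := mul_le_mul_of_nonneg_left
      (show (c:ℤ) - 1 ≤ 2 * (k:ℤ) - 3 - (N:ℤ) by linarith)
      (show (0:ℤ) ≤ 2 * (lam:ℤ) by linarith)
    linarith [hrN, h17]
  have hfin2 : (4 * (lam:ℤ) * ((k:ℤ) - 2) + 1) * (N:ℤ) ≤ (r:ℤ) * (N:ℤ) :=
    mul_le_mul_of_nonneg_right (by linarith [hr]) (by linarith)
  have hP : (0:ℤ) ≤ (lam:ℤ) * (4 * (k:ℤ) - 6) * ((N:ℤ) - 1) :=
    mul_nonneg (mul_nonneg (by linarith) (by linarith)) (by linarith)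
  nlinarith [hfin1, hfin2, hNZ, hP]
end

section
/- Let D = (P, B) be a nontrivial 2-(v,k,λ) design, and let G ≤ Aut(D) be a half-flag-transitive automorphism group of D. If gcd(v-1, 2k-2) ≤ 2, then G is point-primitive on P. -/
open Finset


open Finset

section Counting
variable {P : Type*} [DecidableEq P]

lemma ind_count (blocks : Finset (Finset P)) (X : Finset P) :
    ∑ x ∈ X, (blocks.filter fun B => x ∈ B).card = ∑ B ∈ blocks, (B ∩ X).card := by
  simp only [Finset.card_filter]
  rw [Finset.sum_comm]
  refine Finset.sum_congr rfl fun B _ => ?_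
  rw [Finset.sum_ite_mem, Finset.inter_comm, Finset.card_eq_sum_ones]

lemma perm_image_inv (g : Equiv.Perm P) (B : Finset P) : (B.image ⇑g).image ⇑g⁻¹ = B := by
  rw [Finset.image_image]
  have : ⇑g⁻¹ ∘ ⇑g = id := by ext z; simp
  rw [this, Finset.image_id]

lemma perm_image_inv' {g : Equiv.Perm P} {B B' : Finset P} (h : B.image ⇑g = B') :
    B'.image ⇑g⁻¹ = B := by rw [← h, perm_image_inv]

lemma perm_image_mul (g h : Equiv.Perm P) (B : Finset P) :
    B.image ⇑(h * g) = (B.image ⇑g).image ⇑h := by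
  rw [Finset.image_image]; rfl

lemma perm_image_inter (g : Equiv.Perm P) (X Y : Finset P) :
    (X ∩ Y).image ⇑g = X.image ⇑g ∩ Y.image ⇑g :=
  Finset.image_inter X Y g.injective

lemma pair_count_sum (blocks : Finset (Finset P)) (lam : ℕ) (X Y : Finset P)
    (hd : Disjoint X Y)
    (hpair : ∀ x y : P, x ≠ y → (blocks.filter fun B => x ∈ B ∧ y ∈ B).card = lam) :
    lam * (X.card * Y.card) = ∑ B ∈ blocks, (B ∩ X).card * (B ∩ Y).card := by
  have h1 : ∀ x ∈ X, ∀ y ∈ Y, (blocks.filter fun B => x ∈ B ∧ y ∈ B).card = lam := by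
    intro x hx y hy
    exact hpair x y (fun h => (Finset.disjoint_left.mp hd hx (h ▸ hy)))
  have key : ∀ B : Finset P, ∀ x y : P, (if x ∈ B ∧ y ∈ B then (1:ℕ) else 0)
      = (if x ∈ B then 1 else 0) * (if y ∈ B then 1 else 0) := by
    intro B x y; by_cases h1 : x ∈ B <;> by_cases h2 : y ∈ B <;> simp [h1, h2]
  calc lam * (X.card * Y.card)
      = ∑ x ∈ X, ∑ y ∈ Y, (blocks.filter fun B => x ∈ B ∧ y ∈ B).card := by
        rw [Finset.sum_congr rfl (fun x hx => Finset.sum_congr rfl (fun y hy => h1 x hx y hy))]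
        simp [Finset.sum_const]; ring
    _ = ∑ x ∈ X, ∑ B ∈ blocks, ∑ y ∈ Y, (if x ∈ B ∧ y ∈ B then (1:ℕ) else 0) := by
        simp only [Finset.card_filter]
        exact Finset.sum_congr rfl fun x _ => Finset.sum_comm
    _ = ∑ B ∈ blocks, ∑ x ∈ X, ∑ y ∈ Y, (if x ∈ B ∧ y ∈ B then (1:ℕ) else 0) :=
        Finset.sum_comm
    _ = ∑ B ∈ blocks, (B ∩ X).card * (B ∩ Y).card := by
        refine Finset.sum_congr rfl fun B _ => ?_
        simp only [key B]
        rw [← Finset.sum_mul_sum]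
        rw [Finset.sum_ite_mem, Finset.sum_ite_mem, Finset.inter_comm X B, Finset.inter_comm Y B]
        simp

end Counting

section Basics
variable {P : Type*} [Fintype P] [DecidableEq P]
variable {blocks : Finset (Finset P)} {v k lam r : ℕ}

lemma v_ge_five (hD : IsTwoDesign blocks v k lam r) : 5 ≤ v := by
  have := hD.k_gt; have := hD.k_lt; omega

lemma card_P_big (hD : IsTwoDesign blocks v k lam r) : 1 < Fintype.card P := by
  rw [hD.card_points]; have := v_ge_five hD; omega

lemma blocks_nonempty (hD : IsTwoDesign blocks v k lam r) : blocks.Nonempty := by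
  obtain ⟨x, y, hxy⟩ := Fintype.exists_pair_of_one_lt_card (card_P_big hD)
  have h := hD.pair_count x y hxy
  have hne : (blocks.filter fun B => x ∈ B ∧ y ∈ B).Nonempty := by
    rw [← Finset.card_pos, h]; exact hD.lam_pos
  obtain ⟨B, hB⟩ := hne
  exact ⟨B, (Finset.mem_filter.mp hB).1⟩

lemma r_pos (hD : IsTwoDesign blocks v k lam r) : 0 < r := by
  obtain ⟨x, y, hxy⟩ := Fintype.exists_pair_of_one_lt_card (card_P_big hD)
  have h := hD.pair_count x y hxy
  have hsub : (blocks.filter fun B => x ∈ B ∧ y ∈ B) ⊆ (blocks.filter fun B => x ∈ B) := by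
    intro B hB
    rw [Finset.mem_filter] at hB ⊢
    exact ⟨hB.1, hB.2.1⟩
  have := Finset.card_le_card hsub
  rw [h, hD.repl_count x] at this
  have := hD.lam_pos
  omega

lemma vr_eq_bk (hD : IsTwoDesign blocks v k lam r) : v * r = blocks.card * k := by
  have h := ind_count blocks (Finset.univ : Finset P)
  simp only [hD.repl_count, Finset.sum_const, Finset.inter_univ, smul_eq_mul] at h
  rw [Finset.card_univ, hD.card_points] at h
  rw [h, Finset.sum_congr rfl (fun B hB => hD.block_size B hB), Finset.sum_const, smul_eq_mul]

lemma lam_v_eq_r_k (hD : IsTwoDesign blocks v k lam r) : lam * (v - 1) = r * (k - 1) := by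
  have hx : ∃ x : P, True := ⟨(Fintype.exists_pair_of_one_lt_card (card_P_big hD)).choose, trivial⟩
  obtain ⟨x, -⟩ := hx
  have h := pair_count_sum blocks lam {x} ({x}ᶜ) disjoint_compl_right hD.pair_count
  rw [Finset.card_singleton, Finset.card_compl, Finset.card_singleton, hD.card_points] at h
  have hsplit : ∑ B ∈ blocks, (B ∩ {x}).card * (B ∩ {x}ᶜ).card
      = ∑ B ∈ blocks.filter (fun B => x ∈ B), (k - 1) := by
    rw [Finset.sum_filter]
    refine Finset.sum_congr rfl fun B hB => ?_
    by_cases hxB : x ∈ B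
    · have h1 : B ∩ {x} = {x} := by
        ext z; simp only [Finset.mem_inter, Finset.mem_singleton]
        constructor
        · exact fun h => h.2
        · rintro rfl; exact ⟨hxB, rfl⟩
      have h2 : B ∩ {x}ᶜ = B.erase x := by
        ext z; simp [Finset.mem_erase, and_comm]
      rw [h1, h2, Finset.card_singleton, Finset.card_erase_of_mem hxB, hD.block_size B hB]
      simp [hxB]
    · have h1 : B ∩ {x} = ∅ := by
        ext z; simp only [Finset.mem_inter, Finset.mem_singleton, Finset.notMem_empty,
          iff_false, not_and]
        rintro hz rfl; exact hxB hz
      rw [h1]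
      simp [hxB]
  rw [hsplit, Finset.sum_const, smul_eq_mul, hD.repl_count x, one_mul] at h
  exact h

end Basics

section Trans
variable {P : Type*} [Fintype P] [DecidableEq P]
variable {blocks : Finset (Finset P)} {v k lam r : ℕ}

lemma point_trans (hD : IsTwoDesign blocks v k lam r) (G : Subgroup (Equiv.Perm P))
    (hbt : ∀ B₁ ∈ blocks, ∀ B₂ ∈ blocks, ∃ g ∈ G, B₁.image ⇑g = B₂) :
    ∀ x y : P, ∃ g ∈ G, g x = y := by
  classical
  intro x y
  by_contra hcon
  set X : Finset P := Finset.univ.filter (fun z => ∃ g ∈ G, g x = z) with hXdef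
  have hyX : y ∉ X := by
    intro hy
    rw [hXdef, Finset.mem_filter] at hy
    exact hcon hy.2
  have hxX : x ∈ X := by
    rw [hXdef, Finset.mem_filter]
    exact ⟨Finset.mem_univ x, 1, G.one_mem, rfl⟩
  have hXinv : ∀ g ∈ G, X.image ⇑g = X := by
    intro g hg
    apply Finset.eq_of_subset_of_card_le
    · intro z hz
      rw [Finset.mem_image] at hz
      obtain ⟨w, hw, rfl⟩ := hz
      rw [hXdef, Finset.mem_filter] at hw ⊢
      obtain ⟨-, h0, h0G, rfl⟩ := hw
      exact ⟨Finset.mem_univ _, g * h0, G.mul_mem hg h0G, rfl⟩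
    · rw [Finset.card_image_of_injective _ (Equiv.injective _)]
  have hXcinv : ∀ g ∈ G, Xᶜ.image ⇑g = Xᶜ := by
    intro g hg
    apply Finset.eq_of_subset_of_card_le
    · intro z hz
      rw [Finset.mem_image] at hz
      obtain ⟨w, hw, rfl⟩ := hz
      rw [Finset.mem_compl] at hw ⊢
      intro hgw
      apply hw
      have h2 := hXinv g⁻¹ (G.inv_mem hg)
      rw [← h2, Finset.mem_image]
      exact ⟨g w, hgw, by simp⟩
    · rw [Finset.card_image_of_injective _ (Equiv.injective _)]
  obtain ⟨B0, hB0⟩ := blocks_nonempty hD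
  set a := (B0 ∩ X).card with ha
  set a' := (B0 ∩ Xᶜ).card with ha'
  have haconst : ∀ B ∈ blocks, (B ∩ X).card = a := by
    intro B hB
    obtain ⟨g, hg, hgB⟩ := hbt B0 hB0 B hB
    have hh : B ∩ X = (B0 ∩ X).image ⇑g := by rw [perm_image_inter, hgB, hXinv g hg]
    rw [hh, Finset.card_image_of_injective _ (Equiv.injective _)]
  have ha'const : ∀ B ∈ blocks, (B ∩ Xᶜ).card = a' := by
    intro B hB
    obtain ⟨g, hg, hgB⟩ := hbt B0 hB0 B hB
    have hh : B ∩ Xᶜ = (B0 ∩ Xᶜ).image ⇑g := by rw [perm_image_inter, hgB, hXcinv g hg]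
    rw [hh, Finset.card_image_of_injective _ (Equiv.injective _)]
  set b := blocks.card with hbdef
  have e1 : X.card * r = b * a := by
    have h := ind_count blocks X
    simp only [hD.repl_count, Finset.sum_const, smul_eq_mul] at h
    rw [h, Finset.sum_congr rfl haconst, Finset.sum_const, smul_eq_mul]
  have e2 : Xᶜ.card * r = b * a' := by
    have h := ind_count blocks Xᶜ
    simp only [hD.repl_count, Finset.sum_const, smul_eq_mul] at h
    rw [h, Finset.sum_congr rfl ha'const, Finset.sum_const, smul_eq_mul]
  have e3 : lam * (X.card * Xᶜ.card) = b * (a * a') := by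
    rw [pair_count_sum blocks lam X Xᶜ disjoint_compl_right hD.pair_count,
      Finset.sum_congr rfl (fun B hB => by rw [haconst B hB, ha'const B hB]),
      Finset.sum_const, smul_eq_mul]
  have hb0 : 0 < b := Finset.card_pos.mpr ⟨B0, hB0⟩
  have hr0 : 0 < r := r_pos hD
  have hX0 : 0 < X.card := Finset.card_pos.mpr ⟨x, hxX⟩
  have hXc0 : 0 < Xᶜ.card := Finset.card_pos.mpr ⟨y, Finset.mem_compl.mpr hyX⟩
  have ha0 : 0 < a := by
    have h := Nat.mul_pos hX0 hr0
    rw [e1] at h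
    exact Nat.pos_of_ne_zero (fun hz => by simp [hz] at h)
  have ha'0 : 0 < a' := by
    have h := Nat.mul_pos hXc0 hr0
    rw [e2] at h
    exact Nat.pos_of_ne_zero (fun hz => by simp [hz] at h)
  have key : lam * b = r * r := by
    have h4 : lam * b * (b * (a * a')) = (r * r) * (b * (a * a')) := by
      calc lam * b * (b * (a * a')) = lam * ((b * a) * (b * a')) := by ring
        _ = lam * ((X.card * r) * (Xᶜ.card * r)) := by rw [e1, e2]
        _ = (lam * (X.card * Xᶜ.card)) * (r * r) := by ring
        _ = (b * (a * a')) * (r * r) := by rw [e3]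
        _ = (r * r) * (b * (a * a')) := by ring
    exact Nat.eq_of_mul_eq_mul_right (by positivity) h4
  have hvr := vr_eq_bk hD
  have hrk : r * k = lam * v := by
    have h5 : (r * k) * r = (lam * v) * r := by
      calc (r*k)*r = (r*r)*k := by ring
        _ = (lam * b) * k := by rw [key]
        _ = lam * (b * k) := by ring
        _ = lam * (v * r) := by rw [hvr, hbdef]
        _ = (lam * v) * r := by ring
    exact Nat.eq_of_mul_eq_mul_right hr0 h5
  have hrl := lam_v_eq_r_k hD
  have hv5 := v_ge_five hD
  have hk3 := hD.k_gt
  have hkv := hD.k_lt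
  have hv1 : v = (v - 1) + 1 := by omega
  have hk1 : k = (k - 1) + 1 := by omega
  have h6 : r * (k-1) + r = lam * (v-1) + lam := by
    have e : lam * ((v-1)+1) = lam*(v-1)+lam := by ring
    have e' : r * ((k-1)+1) = r*(k-1)+r := by ring
    rw [← e, ← e', ← hv1, ← hk1]
    exact hrk
  have hlamr : r = lam := by omega
  subst hlamr
  have hveq : v - 1 = k - 1 := Nat.eq_of_mul_eq_mul_left hr0 hrl
  omega

end Trans

theorem half_flag_transitive_point_primitive_of_gcd_le_two
    {P : Type*} [Fintype P] [DecidableEq P]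
    (blocks : Finset (Finset P)) (v k lam r : ℕ)
    (hD : IsTwoDesign blocks v k lam r)
    (G : Subgroup (Equiv.Perm P))
    (hAut : IsAutGroup G blocks)
    (hHFT : HalfFlagTransitive G blocks)
    (hgcd : Nat.gcd (v - 1) (2 * k - 2) ≤ 2) :
    PointPrimitive G := by
  classical
  obtain ⟨hbt, horb⟩ := hHFT
  have htrans := point_trans hD G hbt
  refine ⟨htrans, ?_⟩
  intro C hC
  obtain ⟨hCne, hCuniq, hCinv⟩ := hC
  by_cases hsing : ∀ c ∈ C, c.card = 1
  · exact Or.inl hsing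
  right
  by_contra hCuniv
  push_neg at hsing
  obtain ⟨c0, hc0C, hc0card⟩ := hsing
  obtain ⟨x0, hx0⟩ := hCne c0 hc0C
  have hc2 : 2 ≤ c0.card := by
    have h1 := Finset.card_pos.mpr ⟨x0, hx0⟩
    omega
  have huniq : ∀ y : P, ∀ c ∈ C, y ∈ c → ∀ c' ∈ C, y ∈ c' → c = c' := by
    intro y c hc hyc c' hc' hyc'
    obtain ⟨d, -, hdu⟩ := hCuniq y
    rw [hdu c ⟨hc, hyc⟩, hdu c' ⟨hc', hyc'⟩]
  have hsamecard : ∀ c ∈ C, c.card = c0.card := by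
    intro c hc
    obtain ⟨y, hy⟩ := hCne c hc
    obtain ⟨g, hg, hgy⟩ := htrans y x0
    have himg : c.image ⇑g ∈ C := hCinv g hg c hc
    have hcls : c.image ⇑g = c0 :=
      huniq x0 _ himg (hgy ▸ Finset.mem_image_of_mem _ hy) c0 hc0C hx0
    rw [← hcls, Finset.card_image_of_injective _ (Equiv.injective _)]
  have hc1ex : ∃ c1 ∈ C, c1 ≠ c0 := by
    by_contra hno
    push_neg at hno
    apply hCuniv
    have hc0univ : c0 = Finset.univ := by
      apply Finset.eq_univ_of_forall
      intro z
      obtain ⟨d, ⟨hdC, hzd⟩, -⟩ := hCuniq z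
      rwa [← hno d hdC]
    rw [Finset.eq_singleton_iff_unique_mem]
    exact ⟨hc0univ ▸ hc0C, fun c hc => (hno c hc).trans hc0univ⟩
  obtain ⟨c1, hc1C, hc1ne⟩ := hc1ex
  have hdisj01 : Disjoint c0 c1 := by
    rw [Finset.disjoint_left]
    intro z hz0 hz1
    exact hc1ne (huniq z c1 hc1C hz1 c0 hc0C hz0)
  have h2c : 2 * c0.card ≤ v := by
    have hu := Finset.card_union_of_disjoint hdisj01
    have hle : (c0 ∪ c1).card ≤ Fintype.card P := Finset.card_le_univ _
    rw [hD.card_points] at hle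
    have := hsamecard c1 hc1C
    omega
  -- setup for the half-flag counting
  obtain ⟨B0, hB0⟩ := blocks_nonempty hD
  obtain ⟨O1, O2, hO1ne, hO2ne, hOdisj, hOunion, hOcard, hO1inv, hO2inv, hO1trans, hO2trans⟩ :=
    horb B0 hB0
  obtain ⟨p1, hp1⟩ := hO1ne
  obtain ⟨p2, hp2⟩ := hO2ne
  set Orb1 : P → Finset P → Prop := fun y B => ∃ g ∈ G, B.image ⇑g = B0 ∧ g y = p1 with hOrb1
  set Orb2 : P → Finset P → Prop := fun y B => ∃ g ∈ G, B.image ⇑g = B0 ∧ g y = p2 with hOrb2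
  have hcover : ∀ y : P, ∀ B ∈ blocks, y ∈ B → Orb1 y B ∨ Orb2 y B := by
    intro y B hB hyB
    obtain ⟨g, hg, hgB⟩ := hbt B hB B0 hB0
    have hgy : g y ∈ B0 := hgB ▸ Finset.mem_image_of_mem _ hyB
    rw [← hOunion, Finset.mem_union] at hgy
    rcases hgy with h1 | h2
    · left
      obtain ⟨h, hh, hhB0, hhgy⟩ := hO1trans (g y) h1 p1 hp1
      exact ⟨h * g, G.mul_mem hh hg, by rw [perm_image_mul, hgB, hhB0],
        by rw [Equiv.Perm.mul_apply, hhgy]⟩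
    · right
      obtain ⟨h, hh, hhB0, hhgy⟩ := hO2trans (g y) h2 p2 hp2
      exact ⟨h * g, G.mul_mem hh hg, by rw [perm_image_mul, hgB, hhB0],
        by rw [Equiv.Perm.mul_apply, hhgy]⟩
  obtain ⟨Δ1, ⟨hΔ1C, hp1Δ1⟩, -⟩ := hCuniq p1
  obtain ⟨Δ2, ⟨hΔ2C, hp2Δ2⟩, -⟩ := hCuniq p2
  set s1 := (B0 ∩ Δ1).card with hs1
  set s2 := (B0 ∩ Δ2).card with hs2
  have hval1 : ∀ B, Orb1 x0 B → (B ∩ c0).card = s1 := by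
    rintro B ⟨g, hg, hgB, hgx0⟩
    have himg : c0.image ⇑g ∈ C := hCinv g hg c0 hc0C
    have hmem : p1 ∈ c0.image ⇑g := hgx0 ▸ Finset.mem_image_of_mem _ hx0
    have hcls : c0.image ⇑g = Δ1 := huniq p1 _ himg hmem Δ1 hΔ1C hp1Δ1
    have him : (B ∩ c0).image ⇑g = B0 ∩ Δ1 := by rw [perm_image_inter, hgB, hcls]
    rw [hs1, ← him, Finset.card_image_of_injective _ (Equiv.injective _)]
  have hval2 : ∀ B, Orb2 x0 B → (B ∩ c0).card = s2 := by
    rintro B ⟨g, hg, hgB, hgx0⟩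
    have himg : c0.image ⇑g ∈ C := hCinv g hg c0 hc0C
    have hmem : p2 ∈ c0.image ⇑g := hgx0 ▸ Finset.mem_image_of_mem _ hx0
    have hcls : c0.image ⇑g = Δ2 := huniq p2 _ himg hmem Δ2 hΔ2C hp2Δ2
    have him : (B ∩ c0).image ⇑g = B0 ∩ Δ2 := by rw [perm_image_inter, hgB, hcls]
    rw [hs2, ← him, Finset.card_image_of_injective _ (Equiv.injective _)]
  set R := blocks.filter (fun B => x0 ∈ B) with hR
  have hRcard : R.card = r := hD.repl_count x0
  set T := ∑ B ∈ R, (B ∩ c0).card with hT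
  -- T = r + lam * (c0.card - 1)
  have hTval : T = r + lam * (c0.card - 1) := by
    have hdisjxe : Disjoint {x0} (c0.erase x0) := by
      simp [Finset.disjoint_singleton_left]
    have h := pair_count_sum blocks lam {x0} (c0.erase x0) hdisjxe hD.pair_count
    rw [Finset.card_singleton, Finset.card_erase_of_mem hx0, one_mul] at h
    have hsplit : ∑ B ∈ blocks, (B ∩ {x0}).card * (B ∩ c0.erase x0).card
        = ∑ B ∈ R, (B ∩ c0.erase x0).card := by
      rw [hR, Finset.sum_filter]
      refine Finset.sum_congr rfl fun B hB => ?_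
      by_cases hxB : x0 ∈ B
      · have h1 : B ∩ {x0} = {x0} := by
          ext z; simp only [Finset.mem_inter, Finset.mem_singleton]
          exact ⟨fun h => h.2, fun h => by subst h; exact ⟨hxB, rfl⟩⟩
        rw [if_pos hxB, h1, Finset.card_singleton, one_mul]
      · have h1 : B ∩ {x0} = ∅ := by
          ext z
          simp only [Finset.mem_inter, Finset.mem_singleton, Finset.notMem_empty, iff_false,
            not_and]
          rintro hz rfl; exact hxB hz
        rw [if_neg hxB, h1, Finset.card_empty, zero_mul]
    have hterm : ∀ B ∈ R, (B ∩ c0).card = (B ∩ c0.erase x0).card + 1 := by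
      intro B hBR
      rw [hR, Finset.mem_filter] at hBR
      have hx0m : x0 ∈ B ∩ c0 := Finset.mem_inter.mpr ⟨hBR.2, hx0⟩
      have h2 : B ∩ c0.erase x0 = (B ∩ c0).erase x0 := by
        ext z; simp only [Finset.mem_erase, Finset.mem_inter]; tauto
      rw [h2, Finset.card_erase_of_mem hx0m]
      have h3 : 1 ≤ (B ∩ c0).card := Finset.card_pos.mpr ⟨x0, hx0m⟩
      omega
    rw [hT, Finset.sum_congr rfl hterm, Finset.sum_add_distrib, Finset.sum_const, smul_eq_mul,
      mul_one, ← hsplit, ← h, hRcard]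
    ring
  -- key half-flag identity
  have hkey : ∃ s t : ℕ, 2 * T = r * (s + t) := by
    by_cases hAB : ∃ gA ∈ G, B0.image ⇑gA = B0 ∧ gA p2 = p1
    · -- degenerate case : the two base flags are in the same orbit
      obtain ⟨gA, hgA, hgAB0, hgAp⟩ := hAB
      refine ⟨s1, s1, ?_⟩
      have hallR : ∀ B ∈ R, (B ∩ c0).card = s1 := by
        intro B hBR
        rw [hR, Finset.mem_filter] at hBR
        rcases hcover x0 B hBR.1 hBR.2 with h1 | h2
        · exact hval1 B h1
        · obtain ⟨g, hg, hgB, hgx⟩ := h2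
          exact hval1 B ⟨gA * g, G.mul_mem hgA hg,
            by rw [perm_image_mul, hgB, hgAB0],
            by rw [Equiv.Perm.mul_apply, hgx, hgAp]⟩
      rw [hT, Finset.sum_congr rfl hallR, Finset.sum_const, smul_eq_mul, hRcard]
      ring
    · push_neg at hAB
      set R1 := blocks.filter (fun B => x0 ∈ B ∧ Orb1 x0 B) with hR1
      set R2 := blocks.filter (fun B => x0 ∈ B ∧ Orb2 x0 B) with hR2
      have hdisjR : Disjoint R1 R2 := by
        rw [Finset.disjoint_left]
        rintro B hB1 hB2
        rw [hR1, Finset.mem_filter] at hB1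
        rw [hR2, Finset.mem_filter] at hB2
        obtain ⟨-, -, g1, hg1, hg1B, hg1x⟩ := hB1
        obtain ⟨-, -, g2, hg2, hg2B, hg2x⟩ := hB2
        refine hAB (g1 * g2⁻¹) (G.mul_mem hg1 (G.inv_mem hg2)) ?_ ?_
        · rw [perm_image_mul, perm_image_inv' hg2B, hg1B]
        · rw [Equiv.Perm.mul_apply, ← hg2x, Equiv.Perm.coe_inv, Equiv.symm_apply_apply, hg1x]
      have hunionR : R1 ∪ R2 = R := by
        ext B
        rw [hR1, hR2, hR, Finset.mem_union, Finset.mem_filter, Finset.mem_filter,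
          Finset.mem_filter]
        constructor
        · rintro (⟨h1, h2, -⟩ | ⟨h1, h2, -⟩) <;> exact ⟨h1, h2⟩
        · rintro ⟨h1, h2⟩
          rcases hcover x0 B h1 h2 with h | h
          · exact Or.inl ⟨h1, h2, h⟩
          · exact Or.inr ⟨h1, h2, h⟩
      have hfib1B0 : B0.filter (fun z => Orb1 z B0) = O1 := by
        ext z
        rw [Finset.mem_filter]
        constructor
        · rintro ⟨hzB0, g, hg, hgB0, hgz⟩
          rw [← hOunion, Finset.mem_union] at hzB0
          rcases hzB0 with h | h
          · exact h
          · exfalso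
            obtain ⟨h2, hh2, hh2B0, hh2p⟩ := hO2trans p2 hp2 z h
            exact hAB (g * h2) (G.mul_mem hg hh2)
              (by rw [perm_image_mul, hh2B0, hgB0])
              (by rw [Equiv.Perm.mul_apply, hh2p, hgz])
        · intro hz
          have hzB0 : z ∈ B0 := by rw [← hOunion]; exact Finset.mem_union_left _ hz
          obtain ⟨g, hg, hgB0, hgz⟩ := hO1trans z hz p1 hp1
          exact ⟨hzB0, g, hg, hgB0, hgz⟩
      have hfib2B0 : B0.filter (fun z => Orb2 z B0) = O2 := by
        ext z
        rw [Finset.mem_filter]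
        constructor
        · rintro ⟨hzB0, g, hg, hgB0, hgz⟩
          rw [← hOunion, Finset.mem_union] at hzB0
          rcases hzB0 with h | h
          · exfalso
            obtain ⟨h1, hh1, hh1B0, hh1p⟩ := hO1trans p1 hp1 z h
            refine hAB (g * h1)⁻¹ (G.inv_mem (G.mul_mem hg hh1)) ?_ ?_
            · exact perm_image_inv' (by rw [perm_image_mul, hh1B0, hgB0])
            · have hx : (g * h1) p1 = p2 := by rw [Equiv.Perm.mul_apply, hh1p, hgz]
              rw [← hx, Equiv.Perm.coe_inv, Equiv.symm_apply_apply]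
          · exact h
        · intro hz
          have hzB0 : z ∈ B0 := by rw [← hOunion]; exact Finset.mem_union_right _ hz
          obtain ⟨g, hg, hgB0, hgz⟩ := hO2trans z hz p2 hp2
          exact ⟨hzB0, g, hg, hgB0, hgz⟩
      have hfibcard : ∀ (pp : P), ∀ B ∈ blocks,
          ((B.filter fun z => ∃ g ∈ G, B.image ⇑g = B0 ∧ g z = pp).card
            = ((B0.filter fun z => ∃ g ∈ G, B0.image ⇑g = B0 ∧ g z = pp)).card) := by
        intro pp B hB
        obtain ⟨g, hg, hgB⟩ := hbt B hB B0 hB0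
        have himg : (B.filter fun z => ∃ h ∈ G, B.image ⇑h = B0 ∧ h z = pp).image ⇑g
            = B0.filter (fun z => ∃ h ∈ G, B0.image ⇑h = B0 ∧ h z = pp) := by
          ext y
          simp only [Finset.mem_image, Finset.mem_filter]
          constructor
          · rintro ⟨z, ⟨hzB, h, hh, hhB, hhz⟩, rfl⟩
            refine ⟨hgB ▸ Finset.mem_image_of_mem _ hzB,
              h * g⁻¹, G.mul_mem hh (G.inv_mem hg), ?_, ?_⟩
            · rw [perm_image_mul, perm_image_inv' hgB, hhB]
            · rw [Equiv.Perm.mul_apply, Equiv.Perm.coe_inv, Equiv.symm_apply_apply, hhz]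
          · rintro ⟨hyB0, h, hh, hhB0, hhy⟩
            refine ⟨g⁻¹ y, ⟨?_, h * g, G.mul_mem hh hg, ?_, ?_⟩,
              Equiv.apply_symm_apply g y⟩
            · rw [← perm_image_inv' hgB]; exact Finset.mem_image_of_mem _ hyB0
            · rw [perm_image_mul, hgB, hhB0]
            · rw [Equiv.Perm.mul_apply, Equiv.Perm.coe_inv, Equiv.apply_symm_apply, hhy]
        rw [← himg, Finset.card_image_of_injective _ (Equiv.injective _)]
      have hmono : ∀ (pp : P) (y z : P) (g : Equiv.Perm P), g ∈ G → g y = z →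
          (blocks.filter fun B => y ∈ B ∧ ∃ h ∈ G, B.image ⇑h = B0 ∧ h y = pp).card ≤
          (blocks.filter fun B => z ∈ B ∧ ∃ h ∈ G, B.image ⇑h = B0 ∧ h z = pp).card := by
        intro pp y z g hg hgy
        apply Finset.card_le_card_of_injOn (fun B => B.image ⇑g)
        · intro B hB
          rw [Finset.mem_coe, Finset.mem_filter] at hB ⊢
          obtain ⟨hBb, hyB, h, hh, hhB, hhy⟩ := hB
          refine ⟨hAut g hg B hBb, hgy ▸ Finset.mem_image_of_mem _ hyB,
            h * g⁻¹, G.mul_mem hh (G.inv_mem hg), ?_, ?_⟩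
          · rw [perm_image_mul, perm_image_inv, hhB]
          · rw [Equiv.Perm.mul_apply, ← hgy, Equiv.Perm.coe_inv, Equiv.symm_apply_apply, hhy]
        · intro B1 h1 B2 h2 heq
          have h3 := congrArg (Finset.image ⇑g⁻¹) heq
          rwa [perm_image_inv, perm_image_inv] at h3
      have hNconst : ∀ (pp : P) (y z : P),
          (blocks.filter fun B => y ∈ B ∧ ∃ h ∈ G, B.image ⇑h = B0 ∧ h y = pp).card =
          (blocks.filter fun B => z ∈ B ∧ ∃ h ∈ G, B.image ⇑h = B0 ∧ h z = pp).card := by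
        intro pp y z
        obtain ⟨g, hg, hgy⟩ := htrans y z
        obtain ⟨g', hg', hgy'⟩ := htrans z y
        exact le_antisymm (hmono pp y z g hg hgy) (hmono pp z y g' hg' hgy')
      have hdc : ∀ (pp : P),
          ∑ y : P, (blocks.filter fun B => y ∈ B ∧ ∃ h ∈ G, B.image ⇑h = B0 ∧ h y = pp).card
          = ∑ B ∈ blocks, (B.filter fun z => ∃ h ∈ G, B.image ⇑h = B0 ∧ h z = pp).card := by
        intro pp
        simp only [Finset.card_filter]
        rw [Finset.sum_comm]
        refine Finset.sum_congr rfl fun B _ => ?_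
        simp only [ite_and]
        rw [Finset.sum_ite_mem, Finset.univ_inter]
      have hcount : ∀ (pp : P),
          v * (blocks.filter fun B => x0 ∈ B ∧ ∃ h ∈ G, B.image ⇑h = B0 ∧ h x0 = pp).card
          = blocks.card * ((B0.filter fun z => ∃ h ∈ G, B0.image ⇑h = B0 ∧ h z = pp)).card := by
        intro pp
        calc v * (blocks.filter fun B => x0 ∈ B ∧ ∃ h ∈ G, B.image ⇑h = B0 ∧ h x0 = pp).card
            = ∑ y : P, (blocks.filter fun B => y ∈ B ∧ ∃ h ∈ G, B.image ⇑h = B0 ∧ h y = pp).card := by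
              rw [Finset.sum_congr rfl (fun y _ => hNconst pp y x0), Finset.sum_const,
                Finset.card_univ, hD.card_points, smul_eq_mul]
          _ = ∑ B ∈ blocks, (B.filter fun z => ∃ h ∈ G, B.image ⇑h = B0 ∧ h z = pp).card :=
              hdc pp
          _ = ∑ B ∈ blocks, ((B0.filter fun z => ∃ h ∈ G, B0.image ⇑h = B0 ∧ h z = pp)).card :=
              Finset.sum_congr rfl (hfibcard pp)
          _ = blocks.card * ((B0.filter fun z => ∃ h ∈ G, B0.image ⇑h = B0 ∧ h z = pp)).card := by
              rw [Finset.sum_const, smul_eq_mul]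
      have hv5' := v_ge_five hD
      have hcount1 : v * R1.card = blocks.card * O1.card := by
        have h := hcount p1
        rw [hfib1B0] at h
        exact h
      have hcount2 : v * R2.card = blocks.card * O2.card := by
        have h := hcount p2
        rw [hfib2B0] at h
        exact h
      have hN12 : R1.card = R2.card := by
        apply Nat.eq_of_mul_eq_mul_left (show 0 < v by omega)
        rw [hcount1, hcount2, hOcard]
      have hsplitT : T = R1.card * s1 + R2.card * s2 := by
        rw [hT, ← hunionR, Finset.sum_union hdisjR]
        congr 1
        · rw [Finset.sum_congr rfl
            (fun B hB => hval1 B (Finset.mem_filter.mp (hR1 ▸ hB)).2.2),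
            Finset.sum_const, smul_eq_mul]
        · rw [Finset.sum_congr rfl
            (fun B hB => hval2 B (Finset.mem_filter.mp (hR2 ▸ hB)).2.2),
            Finset.sum_const, smul_eq_mul]
      have hrsum : R1.card + R2.card = r := by
        rw [← hRcard, ← hunionR, Finset.card_union_of_disjoint hdisjR]
      refine ⟨s1, s2, ?_⟩
      rw [← hN12] at hsplitT hrsum
      calc 2 * T = (R1.card + R1.card) * (s1 + s2) := by rw [hsplitT]; ring
        _ = r * (s1 + s2) := by rw [hrsum]
  -- final arithmetic
  obtain ⟨s, t, hst⟩ := hkey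
  have hr0 : 0 < r := r_pos hD
  have hlam := hD.lam_pos
  have hrl := lam_v_eq_r_k hD
  have hv5 := v_ge_five hD
  have hk3 := hD.k_gt
  have hkv := hD.k_lt
  set c := c0.card with hc
  set L := lam * (c - 1) with hL
  have hL1 : 1 ≤ L := by
    rw [hL]
    have : 1 ≤ c - 1 := by omega
    exact Nat.one_le_iff_ne_zero.mpr (Nat.mul_ne_zero (by omega) (by omega))
  have hst3 : 3 ≤ s + t := by
    by_contra hcon
    push_neg at hcon
    interval_cases h : s + t <;> omega
  have he : r * (s + t - 2) = 2 * L := by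
    obtain ⟨u, hu⟩ : ∃ u, s + t = u + 2 := ⟨s + t - 2, by omega⟩
    have h2 : r * (s + t) = r * u + 2 * r := by rw [hu]; ring
    have h3 : s + t - 2 = u := by omega
    rw [h3]
    omega
  have he2 : (s + t - 2) * (v - 1) = 2 * (c - 1) * (k - 1) := by
    apply Nat.eq_of_mul_eq_mul_left hr0
    calc r * ((s + t - 2) * (v - 1)) = (r * (s + t - 2)) * (v - 1) := by ring
      _ = 2 * L * (v - 1) := by rw [he]
      _ = 2 * (c - 1) * (lam * (v - 1)) := by rw [hL]; ring
      _ = 2 * (c - 1) * (r * (k - 1)) := by rw [hrl]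
      _ = r * (2 * (c - 1) * (k - 1)) := by ring
  have hdvd : (v - 1) ∣ (2 * k - 2) * (c - 1) := by
    refine ⟨s + t - 2, ?_⟩
    have h2k : 2 * k - 2 = 2 * (k - 1) := by omega
    calc (2 * k - 2) * (c - 1) = 2 * (c - 1) * (k - 1) := by rw [h2k]; ring
      _ = (s + t - 2) * (v - 1) := he2.symm
      _ = (v - 1) * (s + t - 2) := by ring
  set gd := Nat.gcd (v - 1) (2 * k - 2) with hgd
  have hgdpos : 0 < gd := Nat.gcd_pos_of_pos_left _ (by omega)
  obtain ⟨m, hm⟩ := Nat.gcd_dvd_left (v - 1) (2 * k - 2)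
  obtain ⟨n, hn⟩ := Nat.gcd_dvd_right (v - 1) (2 * k - 2)
  have hco : Nat.Coprime m n := by
    have h1 : m = (v - 1) / gd := by rw [hm]; exact (Nat.mul_div_cancel_left m hgdpos).symm
    have h2 : n = (2 * k - 2) / gd := by rw [hn]; exact (Nat.mul_div_cancel_left n hgdpos).symm
    rw [h1, h2]
    exact Nat.coprime_div_gcd_div_gcd hgdpos
  have hmdvd : m ∣ c - 1 := by
    have h3 : gd * ((s + t - 2) * m) = gd * (n * (c - 1)) := by
      calc gd * ((s + t - 2) * m) = (s + t - 2) * (gd * m) := by ring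
        _ = (s + t - 2) * (v - 1) := by rw [← hm]
        _ = 2 * (c - 1) * (k - 1) := he2
        _ = (2 * (k - 1)) * (c - 1) := by ring
        _ = (2 * k - 2) * (c - 1) := by rw [show 2 * (k-1) = 2 * k - 2 by omega]
        _ = gd * (n * (c - 1)) := by rw [hn]; ring
    have h4 : (s + t - 2) * m = n * (c - 1) := Nat.eq_of_mul_eq_mul_left hgdpos h3
    have h5 : m ∣ n * (c - 1) := ⟨s + t - 2, by rw [← h4]; ring⟩
    exact hco.dvd_of_dvd_mul_left h5
  have hm1 : 0 < m := by
    rcases Nat.eq_zero_or_pos m with h | h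
    · rw [h, Nat.mul_zero] at hm; omega
    · exact h
  have hmle : m ≤ c - 1 := Nat.le_of_dvd (by omega) hmdvd
  have hfin : v - 1 ≤ 2 * (c - 1) := by
    calc v - 1 = gd * m := hm
      _ ≤ 2 * m := Nat.mul_le_mul_right m hgcd
      _ ≤ 2 * (c - 1) := by omega
  omega
end
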